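/- arXiv:2411.14036 — 9 statements merged into one kernel-verified Lean document; each statement's English description precedes it below -/
import Mathlib

section
/- Let m ≥ 3 and let K ≠ 2^[m] be a simplicial complex on [m]. Then Bier(K) is the boundary complex of an (m−1)-simplex (i.e., there exists an m-element subset V of [m] ∪ [m'] such that the faces of Bier(K) are exactly the proper subsets of V) if and only if either K = {σ ⊆ [m] : σ ≠ [m]} (the boundary of the simplex on [m]) or K = {∅}. -/
open Classical

def IsComplex {V : Type*} (K : Set (Finset V)) : Prop :=
  ∅ ∈ K ∧ ∀ σ ∈ K, ∀ τ ⊆ σ, τ ∈ K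

def dual {m : ℕ} (K : Set (Finset (Fin m))) : Set (Finset (Fin m)) :=
  {σ | σᶜ ∉ K}

def inlEmb (m : ℕ) : Fin m ↪ (Fin m ⊕ Fin m) := Function.Embedding.inl

def inrEmb (m : ℕ) : Fin m ↪ (Fin m ⊕ Fin m) := Function.Embedding.inr

/-- The Bier sphere of `K`: faces are `I ∪ J'` with `I ∈ K`, `J ∈ K∨`, `I ∩ J = ∅`,
where the first summand of `Fin m ⊕ Fin m` is `[m]` and the second is the primed copy `[m']`. -/
def bier {m : ℕ} (K : Set (Finset (Fin m))) : Set (Finset (Fin m ⊕ Fin m)) :=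
  {τ | ∃ I ∈ K, ∃ J ∈ dual K, Disjoint I J ∧ τ = I.map (inlEmb m) ∪ J.map (inrEmb m)}

def IsMinNonFace {V : Type*} (K : Set (Finset V)) (σ : Finset V) : Prop :=
  σ ∉ K ∧ ∀ τ ⊂ σ, τ ∈ K

def IsFlag {V : Type*} (K : Set (Finset V)) : Prop :=
  ∀ σ, IsMinNonFace K σ → σ.card ≤ 2

def IsFacet {V : Type*} (K : Set (Finset V)) (σ : Finset V) : Prop :=
  σ ∈ K ∧ ∀ τ ∈ K, σ ⊆ τ → σ = τ

lemma recompose {m : ℕ} (σ : Finset (Fin m ⊕ Fin m)) :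
    σ.toLeft.map (inlEmb m) ∪ σ.toRight.map (inrEmb m) = σ := by
  ext x; cases x <;> simp [inlEmb, inrEmb]

lemma toLeft_decomp {m : ℕ} (I J : Finset (Fin m)) :
    (I.map (inlEmb m) ∪ J.map (inrEmb m)).toLeft = I := by
  ext x; simp [inlEmb, inrEmb]

lemma toRight_decomp {m : ℕ} (I J : Finset (Fin m)) :
    (I.map (inlEmb m) ∪ J.map (inrEmb m)).toRight = J := by
  ext x; simp [inlEmb, inrEmb]

lemma bier_mem_iff {m : ℕ} (K : Set (Finset (Fin m))) (σ : Finset (Fin m ⊕ Fin m)) :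
    σ ∈ bier K ↔ σ.toLeft ∈ K ∧ σ.toRight ∈ dual K ∧ Disjoint σ.toLeft σ.toRight := by
  constructor
  · rintro ⟨I, hI, J, hJ, hd, rfl⟩
    rw [toLeft_decomp, toRight_decomp]
    exact ⟨hI, hJ, hd⟩
  · rintro ⟨h1, h2, h3⟩
    exact ⟨_, h1, _, h2, h3, (recompose σ).symm⟩

theorem bier_eq_boundary_simplex_iff {m : ℕ} (hm : 3 ≤ m)
    (K : Set (Finset (Fin m))) (hK : IsComplex K) (hKne : K ≠ Set.univ) :
    (∃ V : Finset (Fin m ⊕ Fin m), V.card = m ∧ ∀ σ, σ ∈ bier K ↔ σ ⊂ V) ↔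
      (K = {σ : Finset (Fin m) | σ ≠ Finset.univ} ∨ K = {∅}) := by
  obtain ⟨hemp, hdown⟩ := hK
  have huniv : (Finset.univ : Finset (Fin m)) ∉ K := by
    intro h
    apply hKne
    ext σ
    simp only [Set.mem_univ, iff_true]
    exact hdown _ h _ (Finset.subset_univ σ)
  have hdualemp : (∅ : Finset (Fin m)) ∈ dual K := by
    simpa [dual] using huniv
  constructor
  · rintro ⟨V, hVcard, hV⟩
    -- vertices of bier K are exactly the elements of V
    have hmemV : ∀ x, x ∈ V ↔ ({x} : Finset (Fin m ⊕ Fin m)) ∈ bier K := by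
      intro x
      rw [hV]
      constructor
      · intro hx
        refine Finset.ssubset_iff_subset_ne.2 ⟨by simpa, fun h => ?_⟩
        have : ({x} : Finset (Fin m ⊕ Fin m)).card = V.card := by rw [h]
        simp [hVcard] at this
        omega
      · intro h
        exact Finset.singleton_subset_iff.1 h.subset
    have hsl : ∀ i : Fin m, ({Sum.inl i} : Finset (Fin m ⊕ Fin m)) ∈ bier K ↔ {i} ∈ K := by
      intro i
      rw [bier_mem_iff]
      have tl : ({Sum.inl i} : Finset (Fin m ⊕ Fin m)).toLeft = {i} := by ext; simp
      have tr : ({Sum.inl i} : Finset (Fin m ⊕ Fin m)).toRight = ∅ := by ext; simp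
      rw [tl, tr]
      simp [hdualemp]
    have hsr : ∀ j : Fin m, ({Sum.inr j} : Finset (Fin m ⊕ Fin m)) ∈ bier K ↔
        ({j} : Finset (Fin m))ᶜ ∉ K := by
      intro j
      rw [bier_mem_iff]
      have tl : ({Sum.inr j} : Finset (Fin m ⊕ Fin m)).toLeft = ∅ := by ext; simp
      have tr : ({Sum.inr j} : Finset (Fin m ⊕ Fin m)).toRight = {j} := by ext; simp
      rw [tl, tr]
      simp [hemp, dual]
    set A : Finset (Fin m) := Finset.univ.filter (fun i => ({i} : Finset (Fin m)) ∈ K) with hA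
    set B : Finset (Fin m) := Finset.univ.filter
        (fun j => ({j} : Finset (Fin m))ᶜ ∉ K) with hBdef
    have hVeq : V = A.map (inlEmb m) ∪ B.map (inrEmb m) := by
      ext x
      cases x with
      | inl i =>
        rw [hmemV, hsl]
        simp [A, B, inlEmb, inrEmb]
      | inr j =>
        rw [hmemV, hsr]
        simp [A, B, inlEmb, inrEmb]
    have hcard : A.card + B.card = m := by
      rw [hVeq] at hVcard
      rw [Finset.card_union_of_disjoint (by simp [Finset.disjoint_left, inlEmb, inrEmb])] at hVcard
      simpa using hVcard
    by_cases hall : ∀ i : Fin m, ({i} : Finset (Fin m)) ∈ K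
    · left
      have hAuniv : A = Finset.univ := by
        apply Finset.filter_true_of_mem
        intro i _
        exact hall i
      have hAcard : A.card = m := by rw [hAuniv]; simp
      have hBcard : B.card = 0 := by omega
      have hBempty : ∀ j : Fin m, ({j} : Finset (Fin m))ᶜ ∈ K := by
        intro j
        by_contra hc
        have : j ∈ B := by simp [B, hc]
        rw [Finset.card_eq_zero] at hBcard
        simp [hBcard] at this
      ext σ
      simp only [Set.mem_setOf_eq]
      constructor
      · intro hσ h
        exact huniv (h ▸ hσ)
      · intro hσ
        have hj : ∃ j, j ∉ σ := by
          by_contra h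
          push_neg at h
          exact hσ (Finset.eq_univ_iff_forall.2 h)
        obtain ⟨j, hj⟩ := hj
        refine hdown _ (hBempty j) σ ?_
        intro x hx
        simp only [Finset.mem_compl, Finset.mem_singleton]
        rintro rfl
        exact hj hx
    · right
      push_neg at hall
      obtain ⟨i₀, hi₀⟩ := hall
      have hnos : ∀ i : Fin m, ({i} : Finset (Fin m)) ∉ K := by
        intro i₁ h₁
        have hne : i₁ ≠ i₀ := fun h => hi₀ (h ▸ h₁)
        have hBsub : Finset.univ.erase i₀ ⊆ B := by
          intro j hj
          have hji : j ≠ i₀ := (Finset.mem_erase.1 hj).1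
          simp only [hBdef, Finset.mem_filter, Finset.mem_univ, true_and]
          intro hc
          apply hi₀
          refine hdown _ hc {i₀} ?_
          simp [hji]
        have hcB : m - 1 ≤ B.card := by
          have := Finset.card_le_card hBsub
          simpa using this
        have hA1 : i₁ ∈ A := by simp [hA, h₁]
        have hcA : 1 ≤ A.card := Finset.card_pos.2 ⟨i₁, hA1⟩
        have hBc : B.card = m - 1 := by omega
        have hBeq : Finset.univ.erase i₀ = B := by
          apply Finset.eq_of_subset_of_card_le hBsub
          rw [hBc]
          simp
        have hi₀B : i₀ ∉ B := by
          rw [← hBeq]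
          simp
        have hKc : ({i₀} : Finset (Fin m))ᶜ ∈ K := by
          by_contra hc
          exact hi₀B (by simp [hBdef, hc])
        -- find i₂ distinct from i₀ and i₁
        have hne2 : ({i₀, i₁} : Finset (Fin m)) ≠ Finset.univ := by
          intro h
          have h1 : ({i₀, i₁} : Finset (Fin m)).card ≤ 2 :=
            Finset.card_insert_le _ _ |>.trans (by simp)
          rw [h] at h1
          simp at h1
          omega
        obtain ⟨i₂, -, hi₂⟩ :=
          Finset.exists_of_ssubset (Finset.ssubset_univ_iff.2 hne2)
        simp only [Finset.mem_insert, Finset.mem_singleton, not_or] at hi₂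
        have h₂K : ({i₂} : Finset (Fin m)) ∈ K := by
          refine hdown _ hKc {i₂} ?_
          simp [hi₂.1, Ne.symm hi₂.1]
        have hA2 : i₂ ∈ A := by simp [hA, h₂K]
        have hsub2 : ({i₁, i₂} : Finset (Fin m)) ⊆ A := by
          intro x hx
          simp only [Finset.mem_insert, Finset.mem_singleton] at hx
          rcases hx with rfl | rfl
          · exact hA1
          · exact hA2
        have hc2 : ({i₁, i₂} : Finset (Fin m)).card = 2 := by
          rw [Finset.card_insert_of_notMem (by simp [Ne.symm hi₂.2]), Finset.card_singleton]
        have := Finset.card_le_card hsub2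
        rw [hc2] at this
        omega
      ext σ
      simp only [Set.mem_singleton_iff]
      constructor
      · intro hσ
        by_contra hne
        obtain ⟨i, hi⟩ := Finset.nonempty_iff_ne_empty.2 hne
        exact hnos i (hdown _ hσ {i} (by simpa))
      · rintro rfl
        exact hemp
  · rintro (rfl | rfl)
    · -- K = boundary of simplex
      refine ⟨Finset.univ.map (inlEmb m), by simp, fun σ => ?_⟩
      rw [bier_mem_iff]
      constructor
      · rintro ⟨h1, h2, -⟩
        simp only [Set.mem_setOf_eq, not_not, dual] at h1 h2
        have h2' : σ.toRight = ∅ := by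
          rwa [Finset.compl_eq_univ_iff] at h2
        rw [Finset.ssubset_iff_subset_ne]
        constructor
        · intro x hx
          cases x with
          | inl i => simp [inlEmb]
          | inr j =>
            exfalso
            have : j ∈ σ.toRight := Finset.mem_toRight.2 hx
            simp [h2'] at this
        · intro h
          apply h1
          have : σ.toLeft = (Finset.univ.map (inlEmb m)).toLeft := by rw [h]
          rw [this]
          ext i
          simp [inlEmb]
      · intro h
        rw [Finset.ssubset_iff_subset_ne] at h
        have h2' : σ.toRight = ∅ := by
          ext j
          simp only [Finset.notMem_empty, iff_false, Finset.mem_toRight]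
          intro hc
          have := h.1 hc
          simp [inlEmb] at this
        refine ⟨?_, ?_, ?_⟩
        · simp only [Set.mem_setOf_eq]
          intro hc
          apply h.2
          apply Finset.Subset.antisymm h.1
          intro x hx
          simp only [Finset.mem_map, inlEmb, Function.Embedding.inl_apply] at hx
          obtain ⟨i, -, rfl⟩ := hx
          apply Finset.mem_toLeft.1
          rw [hc]
          simp
        · simp [dual, h2']
        · rw [h2']
          exact Finset.disjoint_empty_right _
    · -- K = {∅}
      refine ⟨Finset.univ.map (inrEmb m), by simp, fun σ => ?_⟩
      rw [bier_mem_iff]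
      constructor
      · rintro ⟨h1, h2, -⟩
        simp only [Set.mem_singleton_iff] at h1
        simp only [dual, Set.mem_setOf_eq, Set.mem_singleton_iff] at h2
        have h2' : σ.toRight ≠ Finset.univ := by
          intro hc
          apply h2
          rw [hc]
          simp
        rw [Finset.ssubset_iff_subset_ne]
        constructor
        · intro x hx
          cases x with
          | inl i =>
            exfalso
            have : i ∈ σ.toLeft := Finset.mem_toLeft.2 hx
            simp [h1] at this
          | inr j => simp [inrEmb]
        · intro h
          apply h2'
          have : σ.toRight = (Finset.univ.map (inrEmb m)).toRight := by rw [h]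
          rw [this]
          ext j
          simp [inrEmb]
      · intro h
        rw [Finset.ssubset_iff_subset_ne] at h
        have h1' : σ.toLeft = ∅ := by
          ext i
          simp only [Finset.notMem_empty, iff_false, Finset.mem_toLeft]
          intro hc
          have := h.1 hc
          simp [inrEmb] at this
        refine ⟨by simp [h1'], ?_, ?_⟩
        · simp only [dual, Set.mem_setOf_eq, Set.mem_singleton_iff]
          rw [Finset.compl_eq_empty_iff]
          intro hc
          apply h.2
          apply Finset.Subset.antisymm h.1
          intro x hx
          simp only [Finset.mem_map, inrEmb, Function.Embedding.inr_apply] at hx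
          obtain ⟨j, -, rfl⟩ := hx
          apply Finset.mem_toRight.1
          rw [hc]
          simp
        · rw [h1']
          exact Finset.disjoint_empty_left _
end

section
/- Let m ≥ 1 and let K ≠ 2^[m] be a simplicial complex on [m]. Then the Bier sphere Bier(K) is a flag simplicial complex if and only if both K and its Alexander dual K∨ are flag simplicial complexes. -/
open Classical

lemma map_union_eq_disjSum {m : ℕ} (I J : Finset (Fin m)) :
    I.map (inlEmb m) ∪ J.map (inrEmb m) = I.disjSum J := by
  rw [← Finset.map_inl_disjUnion_map_inr, Finset.disjUnion_eq_union]
  rfl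

lemma map_inl_eq_disjSum {m : ℕ} (I : Finset (Fin m)) :
    I.map (inlEmb m) = I.disjSum ∅ := (Finset.disjSum_empty I).symm

lemma map_inr_eq_disjSum {m : ℕ} (J : Finset (Fin m)) :
    J.map (inrEmb m) = (∅ : Finset (Fin m)).disjSum J := (Finset.empty_disjSum J).symm

lemma mem_bier_iff {m : ℕ} {K : Set (Finset (Fin m))} {τ : Finset (Fin m ⊕ Fin m)} :
    τ ∈ bier K ↔ τ.toLeft ∈ K ∧ τ.toRight ∈ dual K ∧ Disjoint τ.toLeft τ.toRight := by
  constructor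
  · rintro ⟨I, hI, J, hJ, hd, rfl⟩
    rw [map_union_eq_disjSum]
    simpa using ⟨hI, hJ, hd⟩
  · rintro ⟨h1, h2, h3⟩
    exact ⟨_, h1, _, h2, h3, by rw [map_union_eq_disjSum, Finset.toLeft_disjSum_toRight]⟩

lemma subset_map_inl {m : ℕ} {A : Finset (Fin m)} {τ : Finset (Fin m ⊕ Fin m)}
    (h : τ ⊆ A.map (inlEmb m)) : τ = τ.toLeft.map (inlEmb m) := by
  have hr : τ.toRight = ∅ := by
    have := Finset.toRight_subset_toRight h
    rw [map_inl_eq_disjSum, Finset.toRight_disjSum] at this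
    exact Finset.subset_empty.mp this
  conv_lhs => rw [← Finset.toLeft_disjSum_toRight (u := τ)]
  rw [hr, ← map_inl_eq_disjSum]

lemma subset_map_inr {m : ℕ} {A : Finset (Fin m)} {τ : Finset (Fin m ⊕ Fin m)}
    (h : τ ⊆ A.map (inrEmb m)) : τ = τ.toRight.map (inrEmb m) := by
  have hr : τ.toLeft = ∅ := by
    have := Finset.toLeft_subset_toLeft h
    rw [map_inr_eq_disjSum, Finset.toLeft_disjSum] at this
    exact Finset.subset_empty.mp this
  conv_lhs => rw [← Finset.toLeft_disjSum_toRight (u := τ)]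
  rw [hr, ← map_inr_eq_disjSum]

theorem bier_flag_iff {m : ℕ} (hm : 1 ≤ m)
    (K : Set (Finset (Fin m))) (hK : IsComplex K) (hKne : K ≠ Set.univ) :
    IsFlag (bier K) ↔ IsFlag K ∧ IsFlag (dual K) := by
  have huniv : (Finset.univ : Finset (Fin m)) ∉ K := by
    intro h
    apply hKne
    ext σ
    simp only [Set.mem_univ, iff_true]
    exact hK.2 _ h σ (Finset.subset_univ σ)
  have hdual0 : (∅ : Finset (Fin m)) ∈ dual K := by
    simpa [dual] using huniv
  constructor
  · intro hB
    constructor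
    · intro σ hσ
      have h1 : IsMinNonFace (bier K) (σ.map (inlEmb m)) := by
        constructor
        · intro h
          rw [mem_bier_iff, map_inl_eq_disjSum] at h
          rw [Finset.toLeft_disjSum] at h
          exact hσ.1 h.1
        · intro τ hτ
          have hτeq : τ = τ.toLeft.map (inlEmb m) := subset_map_inl hτ.subset
          have hlt : τ.toLeft ⊂ σ := by
            rw [hτeq] at hτ
            exact Finset.map_ssubset_map.mp hτ
          rw [mem_bier_iff, hτeq, map_inl_eq_disjSum, Finset.toLeft_disjSum,
            Finset.toRight_disjSum]
          exact ⟨hσ.2 _ hlt, hdual0, Finset.disjoint_empty_right _⟩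
      simpa using hB _ h1
    · intro σ hσ
      have h1 : IsMinNonFace (bier K) (σ.map (inrEmb m)) := by
        constructor
        · intro h
          rw [mem_bier_iff, map_inr_eq_disjSum] at h
          rw [Finset.toRight_disjSum] at h
          exact hσ.1 h.2.1
        · intro τ hτ
          have hτeq : τ = τ.toRight.map (inrEmb m) := subset_map_inr hτ.subset
          have hlt : τ.toRight ⊂ σ := by
            rw [hτeq] at hτ
            exact Finset.map_ssubset_map.mp hτ
          rw [mem_bier_iff, hτeq, map_inr_eq_disjSum, Finset.toLeft_disjSum,
            Finset.toRight_disjSum]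
          exact ⟨hK.1, hσ.2 _ hlt, Finset.disjoint_empty_left _⟩
      simpa using hB _ h1
  · rintro ⟨hKf, hDf⟩ σ hσ
    set A := σ.toLeft with hA
    set B := σ.toRight with hB
    have hσeq : A.disjSum B = σ := Finset.toLeft_disjSum_toRight
    by_cases hd : Disjoint A B
    · have hcase : A ∉ K ∨ B ∉ dual K := by
        by_contra h
        push_neg at h
        exact hσ.1 (mem_bier_iff.mpr ⟨h.1, h.2, hd⟩)
      rcases hcase with hAn | hBn
      · have hsub : A.map (inlEmb m) ⊆ σ := by
          rw [← hσeq, map_inl_eq_disjSum]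
          exact Finset.disjSum_mono Finset.Subset.rfl (Finset.empty_subset _)
        have hnot : A.map (inlEmb m) ∉ bier K := by
          rw [mem_bier_iff, map_inl_eq_disjSum, Finset.toLeft_disjSum]
          exact fun h => hAn h.1
        have heq : A.map (inlEmb m) = σ := by
          by_contra hne
          exact hnot (hσ.2 _ (lt_of_le_of_ne hsub hne))
        have hmin : IsMinNonFace K A := by
          refine ⟨hAn, fun τ hτ => ?_⟩
          have hlt : τ.map (inlEmb m) ⊂ σ := by
            rw [← heq]
            exact Finset.map_ssubset_map.mpr hτ
          have := hσ.2 _ hlt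
          rw [mem_bier_iff, map_inl_eq_disjSum, Finset.toLeft_disjSum] at this
          exact this.1
        calc σ.card = A.card := by rw [← heq, Finset.card_map]
          _ ≤ 2 := hKf _ hmin
      · have hsub : B.map (inrEmb m) ⊆ σ := by
          rw [← hσeq, map_inr_eq_disjSum]
          exact Finset.disjSum_mono (Finset.empty_subset _) Finset.Subset.rfl
        have hnot : B.map (inrEmb m) ∉ bier K := by
          rw [mem_bier_iff, map_inr_eq_disjSum, Finset.toRight_disjSum]
          exact fun h => hBn h.2.1
        have heq : B.map (inrEmb m) = σ := by
          by_contra hne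
          exact hnot (hσ.2 _ (lt_of_le_of_ne hsub hne))
        have hmin : IsMinNonFace (dual K) B := by
          refine ⟨hBn, fun τ hτ => ?_⟩
          have hlt : τ.map (inrEmb m) ⊂ σ := by
            rw [← heq]
            exact Finset.map_ssubset_map.mpr hτ
          have := hσ.2 _ hlt
          rw [mem_bier_iff, map_inr_eq_disjSum, Finset.toRight_disjSum] at this
          exact this.2.1
        calc σ.card = B.card := by rw [← heq, Finset.card_map]
          _ ≤ 2 := hDf _ hmin
    · obtain ⟨v, hvA, hvB⟩ := Finset.not_disjoint_iff.mp hd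
      have hsub : ({v} : Finset (Fin m)).disjSum {v} ⊆ σ := by
        rw [← hσeq]
        exact Finset.disjSum_mono (Finset.singleton_subset_iff.mpr hvA)
          (Finset.singleton_subset_iff.mpr hvB)
      have hnot : ({v} : Finset (Fin m)).disjSum {v} ∉ bier K := by
        rw [mem_bier_iff, Finset.toLeft_disjSum, Finset.toRight_disjSum]
        rintro ⟨-, -, h⟩
        simp at h
      have heq : ({v} : Finset (Fin m)).disjSum {v} = σ := by
        by_contra hne
        exact hnot (hσ.2 _ (lt_of_le_of_ne hsub hne))
      rw [← heq, Finset.card_disjSum]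
      simp
end

section
/- Let m ≥ 2, let L ≠ 2^[m−1] be a simplicial complex on [m−1], and let K = {σ ∪ T : σ ∈ L, T ⊆ {m}} be the cone over L with apex m. Then the Bier sphere of K is the suspension of the Bier sphere of L: the faces of Bier(K) (a complex on [m] ∪ [m']) are exactly the sets τ ∪ T where τ is a face of Bier(L) (a complex on [m−1] ∪ [(m−1)']) and T ⊆ {m, m'} with |T| ≤ 1. -/
open Classical

/-- The embedding `[m-1] ↪ [m]`, realized as `Fin n ↪ Fin (n+1)` (so `m = n+1`). -/
def castEmb (n : ℕ) : Fin n ↪ Fin (n + 1) := ⟨Fin.castSucc, Fin.castSucc_injective n⟩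

/-- The embedding `[m-1] ∪ [(m-1)'] ↪ [m] ∪ [m']`. -/
def castEmb2 (n : ℕ) : (Fin n ⊕ Fin n) ↪ (Fin (n + 1) ⊕ Fin (n + 1)) :=
  (castEmb n).sumMap (castEmb n)

lemma bcs_last_notMem_map {n : ℕ} (s : Finset (Fin n)) :
    Fin.last n ∉ s.map (castEmb n) := by
  simp [castEmb, Fin.ne_of_lt (Fin.castSucc_lt_last _)]

lemma bcs_sdiff_last {n : ℕ} (s : Finset (Fin n)) (T : Finset (Fin (n+1)))
    (hT : T ⊆ {Fin.last n}) : (s.map (castEmb n) ∪ T) \ {Fin.last n} = s.map (castEmb n) := by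
  ext x
  simp only [Finset.mem_sdiff, Finset.mem_union, Finset.mem_singleton]
  constructor
  · rintro ⟨h | h, hne⟩
    · exact h
    · exact absurd (by simpa using hT h) hne
  · intro h
    exact ⟨Or.inl h, fun he => bcs_last_notMem_map s (he ▸ h)⟩

lemma bcs_decomp {n : ℕ} (σ : Finset (Fin (n+1))) :
    ∃ s : Finset (Fin n), ∃ T ⊆ ({Fin.last n} : Finset (Fin (n+1))),
      σ = s.map (castEmb n) ∪ T := by
  refine ⟨σ.preimage Fin.castSucc ((Fin.castSucc_injective n).injOn),
    σ ∩ {Fin.last n}, Finset.inter_subset_right, ?_⟩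
  ext x
  induction x using Fin.lastCases with
  | last => simp [castEmb, Fin.ne_of_lt (Fin.castSucc_lt_last _), eq_comm]
  | cast y => simp [castEmb, Fin.ne_of_lt (Fin.castSucc_lt_last _),
      (Fin.castSucc_injective n).eq_iff]

lemma bcs_compl {n : ℕ} (s : Finset (Fin n)) (T : Finset (Fin (n+1)))
    (hT : T ⊆ {Fin.last n}) :
    (s.map (castEmb n) ∪ T)ᶜ = sᶜ.map (castEmb n) ∪ ({Fin.last n} \ T) := by
  ext x
  induction x using Fin.lastCases with
  | last => simp [castEmb, Fin.ne_of_lt (Fin.castSucc_lt_last _), eq_comm]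
  | cast y =>
    have : Fin.castSucc y ∉ T := fun h => by
      have := hT h; simp at this
    simp [castEmb, this, Fin.ne_of_lt (Fin.castSucc_lt_last _),
      (Fin.castSucc_injective n).eq_iff]

lemma bcs_memK {n : ℕ} (L : Set (Finset (Fin n))) (K : Set (Finset (Fin (n + 1))))
    (hKdef : K = {σ | ∃ τ ∈ L, ∃ T ⊆ ({Fin.last n} : Finset (Fin (n + 1))),
      σ = τ.map (castEmb n) ∪ T})
    (s : Finset (Fin n)) (T : Finset (Fin (n+1))) (hT : T ⊆ {Fin.last n}) :
    s.map (castEmb n) ∪ T ∈ K ↔ s ∈ L := by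
  rw [hKdef]
  constructor
  · rintro ⟨τ, hτ, T', hT', heq⟩
    have h2 : (s.map (castEmb n) ∪ T) \ {Fin.last n} =
        (τ.map (castEmb n) ∪ T') \ {Fin.last n} := by rw [heq]
    rw [bcs_sdiff_last s T hT, bcs_sdiff_last τ T' hT'] at h2
    rwa [Finset.map_injective (castEmb n) h2]
  · intro hs
    exact ⟨s, hs, T, hT, rfl⟩

lemma bcs_memDualK {n : ℕ} (L : Set (Finset (Fin n))) (K : Set (Finset (Fin (n + 1))))
    (hKdef : K = {σ | ∃ τ ∈ L, ∃ T ⊆ ({Fin.last n} : Finset (Fin (n + 1))),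
      σ = τ.map (castEmb n) ∪ T})
    (s : Finset (Fin n)) (T : Finset (Fin (n+1))) (hT : T ⊆ {Fin.last n}) :
    s.map (castEmb n) ∪ T ∈ dual K ↔ s ∈ dual L := by
  unfold dual
  simp only [Set.mem_setOf_eq]
  rw [bcs_compl s T hT,
    bcs_memK L K hKdef sᶜ ({Fin.last n} \ T) (Finset.sdiff_subset)]

lemma bcs_map_inl_comm {n : ℕ} (s : Finset (Fin n)) :
    (s.map (castEmb n)).map (inlEmb (n+1)) = (s.map (inlEmb n)).map (castEmb2 n) := by
  rw [Finset.map_map, Finset.map_map]; rfl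

lemma bcs_map_inr_comm {n : ℕ} (s : Finset (Fin n)) :
    (s.map (castEmb n)).map (inrEmb (n+1)) = (s.map (inrEmb n)).map (castEmb2 n) := by
  rw [Finset.map_map, Finset.map_map]; rfl

lemma bcs_union_eq {n : ℕ} (i j : Finset (Fin n)) (T₁ T₂ : Finset (Fin (n+1))) :
    (i.map (castEmb n) ∪ T₁).map (inlEmb (n+1)) ∪ (j.map (castEmb n) ∪ T₂).map (inrEmb (n+1))
      = ((i.map (inlEmb n) ∪ j.map (inrEmb n)).map (castEmb2 n)) ∪
        (T₁.map (inlEmb (n+1)) ∪ T₂.map (inrEmb (n+1))) := by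
  simp only [Finset.map_union, bcs_map_inl_comm, bcs_map_inr_comm]
  ext x
  simp only [Finset.mem_union]
  tauto

theorem bier_of_cone_is_suspension {n : ℕ} (hn : 1 ≤ n)
    (L : Set (Finset (Fin n))) (hL : IsComplex L) (hLne : L ≠ Set.univ)
    (K : Set (Finset (Fin (n + 1))))
    (hKdef : K = {σ | ∃ τ ∈ L, ∃ T ⊆ ({Fin.last n} : Finset (Fin (n + 1))),
      σ = τ.map (castEmb n) ∪ T}) :
    ∀ σ : Finset (Fin (n + 1) ⊕ Fin (n + 1)),
      σ ∈ bier K ↔ ∃ τ ∈ bier L, ∃ T : Finset (Fin (n + 1) ⊕ Fin (n + 1)),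
        T ⊆ {Sum.inl (Fin.last n), Sum.inr (Fin.last n)} ∧ T.card ≤ 1 ∧
        σ = τ.map (castEmb2 n) ∪ T := by
  intro σ
  constructor
  · rintro ⟨I, hI, J, hJ, hdisj, rfl⟩
    obtain ⟨i, T₁, hT₁, rfl⟩ := bcs_decomp I
    obtain ⟨j, T₂, hT₂, rfl⟩ := bcs_decomp J
    have hi : i ∈ L := (bcs_memK L K hKdef i T₁ hT₁).mp hI
    have hj : j ∈ dual L := (bcs_memDualK L K hKdef j T₂ hT₂).mp hJ
    rw [Finset.disjoint_union_left, Finset.disjoint_union_right,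
      Finset.disjoint_union_right] at hdisj
    obtain ⟨⟨dij, dIT₂⟩, dT₁j, dT₁T₂⟩ := hdisj
    have dij' : Disjoint i j := by
      rw [Finset.disjoint_left] at dij ⊢
      intro a ha hb
      exact dij (Finset.mem_map_of_mem _ ha) (Finset.mem_map_of_mem _ hb)
    refine ⟨i.map (inlEmb n) ∪ j.map (inrEmb n), ⟨i, hi, j, hj, dij', rfl⟩,
      T₁.map (inlEmb (n+1)) ∪ T₂.map (inrEmb (n+1)), ?_, ?_, by
        rw [bcs_union_eq]⟩
    · intro x hx
      simp only [Finset.mem_union, Finset.mem_map] at hx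
      rcases hx with ⟨y, hy, rfl⟩ | ⟨y, hy, rfl⟩
      · have := hT₁ hy; simp at this; simp [inlEmb, this]
      · have := hT₂ hy; simp at this; simp [inrEmb, this]
    · rcases Finset.subset_singleton_iff.mp hT₁ with rfl | rfl <;>
        rcases Finset.subset_singleton_iff.mp hT₂ with rfl | rfl
      · simp
      · simp
      · simp
      · simp at dT₁T₂
  · rintro ⟨τ, ⟨i, hi, j, hj, dij, rfl⟩, T, hTsub, hTcard, rfl⟩
    have key : ∀ T₁ T₂ : Finset (Fin (n+1)), T₁ ⊆ {Fin.last n} → T₂ ⊆ {Fin.last n} →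
        Disjoint T₁ T₂ →
        (i.map (inlEmb n) ∪ j.map (inrEmb n)).map (castEmb2 n) ∪
          (T₁.map (inlEmb (n+1)) ∪ T₂.map (inrEmb (n+1))) ∈ bier K := by
      intro T₁ T₂ hT₁ hT₂ hd
      refine ⟨i.map (castEmb n) ∪ T₁, (bcs_memK L K hKdef i T₁ hT₁).mpr hi,
        j.map (castEmb n) ∪ T₂, (bcs_memDualK L K hKdef j T₂ hT₂).mpr hj, ?_,
        (bcs_union_eq i j T₁ T₂).symm⟩
      rw [Finset.disjoint_union_left, Finset.disjoint_union_right,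
        Finset.disjoint_union_right]
      refine ⟨⟨(Finset.disjoint_map _).mpr dij, ?_⟩, ?_, hd⟩
      · rw [Finset.disjoint_left]
        intro a ha hb
        have := hT₂ hb; simp at this
        exact bcs_last_notMem_map i (this ▸ ha)
      · rw [Finset.disjoint_left]
        intro a ha hb
        have := hT₁ ha; simp at this
        exact bcs_last_notMem_map j (this ▸ hb)
    have htri : T = ∅ ∨ T = {Sum.inl (Fin.last n)} ∨ T = {Sum.inr (Fin.last n)} := by
      by_cases h1 : Sum.inl (Fin.last n) ∈ T <;>
        by_cases h2 : Sum.inr (Fin.last n) ∈ T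
      · exfalso
        have hsub : ({Sum.inl (Fin.last n), Sum.inr (Fin.last n)} :
            Finset (Fin (n+1) ⊕ Fin (n+1))) ⊆ T := by
          intro x hx; simp at hx; rcases hx with rfl | rfl <;> assumption
        have := Finset.card_le_card hsub
        simp at this
        omega
      · right; left
        ext x
        simp only [Finset.mem_singleton]
        constructor
        · intro hx
          have := hTsub hx; simp at this
          rcases this with rfl | rfl
          · rfl
          · exact absurd hx h2
        · rintro rfl; exact h1
      · right; right
        ext x
        simp only [Finset.mem_singleton]
        constructor
        · intro hx
          have := hTsub hx; simp at this
          rcases this with rfl | rfl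
          · exact absurd hx h1
          · rfl
        · rintro rfl; exact h2
      · left
        ext x
        simp only [Finset.notMem_empty, iff_false]
        intro hx
        have := hTsub hx; simp at this
        rcases this with rfl | rfl
        · exact h1 hx
        · exact h2 hx
    rcases htri with rfl | rfl | rfl
    · have := key ∅ ∅ (by simp) (by simp) (by simp)
      simpa using this
    · have := key {Fin.last n} ∅ (by simp) (by simp) (by simp)
      simpa [inlEmb] using this
    · have := key ∅ {Fin.last n} (by simp) (by simp) (by simp)
      simpa [inrEmb] using this
end

section
/- Let m ≥ 5 and let K be a flag simplicial complex on [m] with no ghost vertices that is pure with every facet of cardinality m−2 (equivalently, pure of dimension m−3). Then K is a cone: there exists a vertex v ∈ [m] contained in every facet of K. -/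
open Classical

/-! If two facets cover all vertices, a vertex `v` in both lies in every facet: by flagness and
maximality a facet missing `v` contains a non-neighbour of `v`, yet that vertex shares one of the
two covering facets with `v`. Since facets have size `m - 2`, two facets always share a vertex
when `m ≥ 5`. So if there is no cone vertex, the two-element complements of the facets pairwise
intersect and cover all `m ≥ 4` vertices; such a family is a star, whose centre lies in no facet
and hence is a ghost vertex. -/

namespace Finset

variable {α : Type*} [DecidableEq α]

theorem eq_or_eq_of_card_eq_two {s : Finset α} (hs : s.card = 2) {x y z : α} (hx : x ∈ s)
    (hy : y ∈ s) (hxy : x ≠ y) (hz : z ∈ s) : z = x ∨ z = y := by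
  by_contra! h
  have := two_lt_card.2 ⟨x, hx, y, hy, z, hz, hxy, h.1.symm, h.2.symm⟩
  omega

/-- Pairwise intersecting two-element sets covering at least four points form a star: a triangle
covers only three. -/
theorem exists_forall_mem_of_card_eq_two_of_not_disjoint [Fintype α] (𝓟 : Set (Finset α))
    (hcard : ∀ P ∈ 𝓟, P.card = 2) (hinter : ∀ P ∈ 𝓟, ∀ Q ∈ 𝓟, ¬Disjoint P Q)
    (hcover : ∀ x, ∃ P ∈ 𝓟, x ∈ P) (hα : 4 ≤ Fintype.card α) : ∃ w, ∀ P ∈ 𝓟, w ∈ P := by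
  obtain ⟨x⟩ : Nonempty α := Fintype.card_pos_iff.1 (by omega)
  obtain ⟨P₀, hP₀, -⟩ := hcover x
  obtain ⟨c, hc, d, hd, hcd⟩ :=
    one_lt_card.1 (by rw [card_compl, hcard P₀ hP₀]; omega : 1 < P₀ᶜ.card)
  rw [mem_compl] at hc hd
  obtain ⟨Pc, hPc, hcPc⟩ := hcover c
  obtain ⟨Pd, hPd, hdPd⟩ := hcover d
  obtain ⟨t, htPc, htP₀⟩ := not_disjoint_iff.1 (hinter _ hPc _ hP₀)
  obtain ⟨s, hsPd, hsP₀⟩ := not_disjoint_iff.1 (hinter _ hPd _ hP₀)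
  have hct : c ≠ t := ne_of_mem_of_not_mem htP₀ hc |>.symm
  have hds : d ≠ s := ne_of_mem_of_not_mem hsP₀ hd |>.symm
  have hPc_eq := fun {z} => eq_or_eq_of_card_eq_two (hcard _ hPc) hcPc htPc hct (z := z)
  have hPd_eq := fun {z} => eq_or_eq_of_card_eq_two (hcard _ hPd) hdPd hsPd hds (z := z)
  have hts : t = s := by
    obtain ⟨z, hzPc, hzPd⟩ := not_disjoint_iff.1 (hinter _ hPc _ hPd)
    rcases hPc_eq hzPc with rfl | rfl <;> rcases hPd_eq hzPd with rfl | rfl <;> simp_all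
  subst hts
  refine ⟨t, fun P hP => by_contra fun htP => ?_⟩
  obtain ⟨a, haP, haPc⟩ := not_disjoint_iff.1 (hinter _ hP _ hPc)
  obtain ⟨b, hbP, hbPd⟩ := not_disjoint_iff.1 (hinter _ hP _ hPd)
  obtain ⟨e, heP, heP₀⟩ := not_disjoint_iff.1 (hinter _ hP _ hP₀)
  obtain rfl : a = c := (hPc_eq haPc).resolve_right (ne_of_mem_of_not_mem haP htP)
  obtain rfl : b = d := (hPd_eq hbPd).resolve_right (ne_of_mem_of_not_mem hbP htP)
  rcases eq_or_eq_of_card_eq_two (hcard _ hP) haP hbP hcd heP with rfl | rfl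
  · exact hc heP₀
  · exact hd heP₀

end Finset

section FlagComplex

variable {V : Type*} {K : Set (Finset V)}

theorem exists_isFacet_superset [Finite V] {S : Finset V} (hS : S ∈ K) :
    ∃ σ, IsFacet K σ ∧ S ⊆ σ := by
  obtain ⟨σ, hSσ, hσ⟩ := Finite.exists_le_maximal hS
  exact ⟨σ, ⟨hσ.1, fun τ hτ hστ => le_antisymm hστ (hσ.2 hτ hστ)⟩, hSσ⟩

variable [DecidableEq V]

theorem IsComplex.pair_mem (hK : IsComplex K) {σ : Finset V} (hσ : σ ∈ K) {x y : V}
    (hx : x ∈ σ) (hy : y ∈ σ) : ({x, y} : Finset V) ∈ K :=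
  hK.2 σ hσ _ (Finset.insert_subset hx (Finset.singleton_subset_iff.2 hy))

theorem IsFlag.mem_of_forall_pair_mem (hK : IsComplex K) (hflag : IsFlag K) (S : Finset V)
    (hS : ∀ x ∈ S, ∀ y ∈ S, ({x, y} : Finset V) ∈ K) : S ∈ K := by
  induction S using Finset.strongInduction with
  | H S ih =>
    by_contra hSK
    have hmin : IsMinNonFace K S :=
      ⟨hSK, fun τ hτ => ih τ hτ fun x hx y hy => hS x (hτ.1 hx) y (hτ.1 hy)⟩
    apply hSK
    obtain h | h | h : S.card = 0 ∨ S.card = 1 ∨ S.card = 2 := by have := hflag S hmin; omega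
    · rw [Finset.card_eq_zero.1 h]; exact hK.1
    · obtain ⟨a, rfl⟩ := Finset.card_eq_one.1 h; simpa using hS a (by simp) a (by simp)
    · obtain ⟨a, b, -, rfl⟩ := Finset.card_eq_two.1 h; exact hS a (by simp) b (by simp)

theorem IsFlag.exists_pair_not_mem_of_not_mem_facet (hK : IsComplex K) (hflag : IsFlag K)
    {σ : Finset V} (hσ : IsFacet K σ) {u : V} (hu : ({u} : Finset V) ∈ K) (huσ : u ∉ σ) :
    ∃ x ∈ σ, ({u, x} : Finset V) ∉ K := by
  by_contra! h
  have hins : insert u σ ∈ K := by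
    refine hflag.mem_of_forall_pair_mem hK _ fun x hx y hy => ?_
    rw [Finset.mem_insert] at hx hy
    rcases hx with rfl | hx <;> rcases hy with rfl | hy
    · simpa using hu
    · exact h y hy
    · rw [Finset.pair_comm]; exact h x hx
    · exact hK.pair_mem hσ.1 hx hy
  exact huσ (hσ.2 _ hins (Finset.subset_insert u σ) ▸ Finset.mem_insert_self u σ)

theorem IsFlag.inter_subset_of_union_eq_univ [Fintype V] (hK : IsComplex K) (hflag : IsFlag K)
    {σ₁ σ₂ σ : Finset V} (h₁ : IsFacet K σ₁) (h₂ : IsFacet K σ₂)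
    (hcover : σ₁ ∪ σ₂ = Finset.univ) (hσ : IsFacet K σ) : σ₁ ∩ σ₂ ⊆ σ := by
  intro v hv
  rw [Finset.mem_inter] at hv
  by_contra hvσ
  obtain ⟨x, -, hx⟩ := hflag.exists_pair_not_mem_of_not_mem_facet hK hσ
    (hK.2 _ h₁.1 _ (Finset.singleton_subset_iff.2 hv.1)) hvσ
  rcases Finset.mem_union.1 (hcover ▸ Finset.mem_univ x) with h | h
  · exact hx (hK.pair_mem h₁.1 hv.1 h)
  · exact hx (hK.pair_mem h₂.1 hv.2 h)

end FlagComplex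

theorem flag_pure_codim2_is_cone {m : ℕ} (hm : 5 ≤ m)
    (K : Set (Finset (Fin m))) (hK : IsComplex K)
    (hghost : ∀ i : Fin m, ({i} : Finset (Fin m)) ∈ K)
    (hflag : IsFlag K)
    (hpure : ∀ σ, IsFacet K σ → σ.card = m - 2) :
    ∃ v : Fin m, ∀ σ, IsFacet K σ → v ∈ σ := by
  by_contra! hcone
  have hcompl_card (σ : Finset (Fin m)) (hσ : IsFacet K σ) : σᶜ.card = 2 := by
    rw [Finset.card_compl, Fintype.card_fin, hpure σ hσ]; omega
  have hcompl_inter (σ τ : Finset (Fin m)) (hσ : IsFacet K σ) (hτ : IsFacet K τ) :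
      ¬Disjoint σᶜ τᶜ := by
    intro hdisj
    have hcover : σ ∪ τ = Finset.univ := by
      rwa [← Finset.compl_eq_empty_iff, Finset.compl_union, ← Finset.disjoint_iff_inter_eq_empty]
    obtain ⟨v, hv⟩ : (σ ∩ τ).Nonempty := by
      have := Finset.card_inter_add_card_union σ τ
      rw [hcover, Finset.card_univ, Fintype.card_fin, hpure σ hσ, hpure τ hτ] at this
      exact Finset.card_pos.1 (by omega)
    obtain ⟨ρ, hρ, hvρ⟩ := hcone v
    exact hvρ (hflag.inter_subset_of_union_eq_univ hK hσ hτ hcover hρ hv)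
  obtain ⟨w, hw⟩ := Finset.exists_forall_mem_of_card_eq_two_of_not_disjoint {P | IsFacet K Pᶜ}
    (fun P hP => by simpa using hcompl_card _ hP)
    (fun P hP Q hQ => by simpa using hcompl_inter _ _ hP hQ)
    (fun x => let ⟨σ, hσ, hxσ⟩ := hcone x; ⟨σᶜ, by simpa using hσ, Finset.mem_compl.2 hxσ⟩)
    (by rw [Fintype.card_fin]; omega)
  obtain ⟨σ, hσ, hwσ⟩ := exists_isFacet_superset (hghost w)
  exact Finset.mem_compl.1 (hw σᶜ (by simpa using hσ)) (hwσ (Finset.mem_singleton_self w))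
end

section
/- Let m ≥ 2 and let K ≠ 2^[m] be a simplicial complex on [m] with no ghost vertices, and let W ⊆ [m] be the union of all minimal non-faces of K. Then the Bier sphere Bier(K) is flag if and only if one of the following holds: (a) |W| = 2; (b) |W| = 3 and no 2-element subset of W is a face of K; (c) |W| = 3 and exactly one 2-element subset of W is a face of K; (d) |W| = 4 and there is a labeling W = {a,b,c,d} such that the 2-element subsets of W that are faces of K are exactly {a,b}, {b,c}, {c,d}; (e) |W| = 4 and there is a labeling W = {a,b,c,d} such that the 2-element subsets of W that are faces of K are exactly {a,b}, {b,c}, {c,d}, {d,a}; (f) |W| = 4 and there is a labeling W = {a,b,c,d} such that the 2-element subsets of W that are faces of K are exactly {a,b}, {c,d}. -/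
open Classical

section Infra

variable {m : ℕ} {K : Set (Finset (Fin m))}

lemma univ_not_mem (hK : IsComplex K) (hKne : K ≠ Set.univ) :
    (Finset.univ : Finset (Fin m)) ∉ K := by
  intro h
  apply hKne
  ext σ
  simp only [Set.mem_univ, iff_true]
  exact hK.2 _ h _ (Finset.subset_univ σ)

lemma empty_mem_dual (hK : IsComplex K) (hKne : K ≠ Set.univ) : (∅ : Finset (Fin m)) ∈ dual K := by
  simp only [dual, Set.mem_setOf_eq, Finset.compl_empty]
  exact univ_not_mem hK hKne

lemma mem_map_union_iff_inl (A B : Finset (Fin m)) (x : Fin m) :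
    Sum.inl x ∈ A.map (inlEmb m) ∪ B.map (inrEmb m) ↔ x ∈ A := by
  simp [inlEmb, inrEmb]

lemma mem_map_union_iff_inr (A B : Finset (Fin m)) (x : Fin m) :
    Sum.inr x ∈ A.map (inlEmb m) ∪ B.map (inrEmb m) ↔ x ∈ B := by
  simp [inlEmb, inrEmb]

lemma map_union_inj {A B A' B' : Finset (Fin m)}
    (h : A.map (inlEmb m) ∪ B.map (inrEmb m) = A'.map (inlEmb m) ∪ B'.map (inrEmb m)) :
    A = A' ∧ B = B' := by
  constructor
  · ext x
    rw [← mem_map_union_iff_inl A B x, h, mem_map_union_iff_inl]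
  · ext x
    rw [← mem_map_union_iff_inr A B x, h, mem_map_union_iff_inr]

lemma map_mem_bier_iff {A B : Finset (Fin m)} :
    A.map (inlEmb m) ∪ B.map (inrEmb m) ∈ bier K ↔ A ∈ K ∧ B ∈ dual K ∧ Disjoint A B := by
  constructor
  · rintro ⟨I, hI, J, hJ, hd, heq⟩
    obtain ⟨h1, h2⟩ := map_union_inj heq.symm
    subst h1; subst h2
    exact ⟨hI, hJ, hd⟩
  · rintro ⟨h1, h2, h3⟩
    exact ⟨A, h1, B, h2, h3, rfl⟩

lemma exists_minNonFace (K : Set (Finset (Fin m))) (hK : IsComplex K) :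
    ∀ σ : Finset (Fin m), σ ∉ K → ∃ τ, τ ⊆ σ ∧ IsMinNonFace K τ := by
  intro σ
  induction σ using Finset.strongInduction with
  | _ σ ih =>
    intro h
    by_cases hmin : ∀ τ ⊂ σ, τ ∈ K
    · exact ⟨σ, subset_rfl, h, hmin⟩
    · push_neg at hmin
      obtain ⟨τ, hτσ, hτ⟩ := hmin
      obtain ⟨ρ, hρ, hmin⟩ := ih τ hτσ hτ
      exact ⟨ρ, hρ.trans hτσ.subset, hmin⟩

lemma ssubset_pair_mem (hK : IsComplex K) (hghost : ∀ i : Fin m, ({i} : Finset (Fin m)) ∈ K)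
    {x y : Fin m} {τ : Finset (Fin m)} (h : τ ⊂ ({x, y} : Finset (Fin m))) : τ ∈ K := by
  have hcard : τ.card ≤ 1 := by
    have h2 : ({x, y} : Finset (Fin m)).card ≤ 2 := Finset.card_insert_le _ _ |>.trans (by simp)
    have := Finset.card_lt_card h
    omega
  rcases Finset.eq_empty_or_nonempty τ with rfl | ⟨z, hz⟩
  · exact hK.1
  · have : τ = {z} := by
      apply Finset.eq_singleton_iff_unique_mem.2
      refine ⟨hz, fun w hw => ?_⟩
      have := Finset.card_le_one.1 hcard w hw z hz
      exact this
    subst this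
    exact hghost z

lemma pair_minNonFace (hK : IsComplex K) (hghost : ∀ i : Fin m, ({i} : Finset (Fin m)) ∈ K)
    {x y : Fin m} (hxy : x ≠ y) (h : ({x, y} : Finset (Fin m)) ∉ K) :
    IsMinNonFace K {x, y} :=
  ⟨h, fun _ hτ => ssubset_pair_mem hK hghost hτ⟩

lemma minNonFace_card_ge (hK : IsComplex K)
    (hghost : ∀ i : Fin m, ({i} : Finset (Fin m)) ∈ K)
    {σ : Finset (Fin m)} (h : IsMinNonFace K σ) : 2 ≤ σ.card := by
  by_contra hc
  push_neg at hc
  interval_cases hn : σ.card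
  · rw [Finset.card_eq_zero] at hn; subst hn; exact h.1 hK.1
  · rw [Finset.card_eq_one] at hn; obtain ⟨z, rfl⟩ := hn; exact h.1 (hghost z)

lemma flag_nonedge (hK : IsComplex K) (hghost : ∀ i : Fin m, ({i} : Finset (Fin m)) ∈ K)
    (hflag : IsFlag K) {σ : Finset (Fin m)} (h : σ ∉ K) :
    ∃ x ∈ σ, ∃ y ∈ σ, x ≠ y ∧ ({x, y} : Finset (Fin m)) ∉ K := by
  obtain ⟨τ, hτσ, hτ⟩ := exists_minNonFace K hK σ h
  have h2 : τ.card = 2 := le_antisymm (hflag τ hτ) (minNonFace_card_ge hK hghost hτ)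
  obtain ⟨x, y, hxy, rfl⟩ := Finset.card_eq_two.1 h2
  exact ⟨x, hτσ (by simp), y, hτσ (by simp), hxy, hτ.1⟩

lemma flag_clique (hK : IsComplex K) (hghost : ∀ i : Fin m, ({i} : Finset (Fin m)) ∈ K)
    (hflag : IsFlag K) {σ : Finset (Fin m)}
    (hpairs : ∀ x ∈ σ, ∀ y ∈ σ, x ≠ y → ({x, y} : Finset (Fin m)) ∈ K) : σ ∈ K := by
  by_contra h
  obtain ⟨x, hx, y, hy, hxy, hne⟩ := flag_nonedge hK hghost hflag h
  exact hne (hpairs x hx y hy hxy)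

lemma exists_facet (hK : IsComplex K) {σ : Finset (Fin m)} (hσ : σ ∈ K) :
    ∃ τ, IsFacet K τ ∧ σ ⊆ τ := by
  classical
  let S : Finset (Finset (Fin m)) :=
    Finset.univ.powerset.filter (fun τ => τ ∈ K ∧ σ ⊆ τ)
  have hσS : σ ∈ S := by simp [S, hσ]
  obtain ⟨τ, hτS, hmax⟩ := S.exists_max_image Finset.card ⟨σ, hσS⟩
  simp only [S, Finset.mem_filter, Finset.mem_powerset] at hτS
  refine ⟨τ, ⟨hτS.2.1, fun ρ hρ hsub => ?_⟩, hτS.2.2⟩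
  have hρS : ρ ∈ S := by simp [S, hρ, hτS.2.2.trans hsub]
  exact Finset.eq_of_subset_of_card_le hsub (hmax ρ hρS)

end Infra

section StepA
variable {m : ℕ} {K : Set (Finset (Fin m))}

noncomputable def pA (τ : Finset (Fin m ⊕ Fin m)) : Finset (Fin m) :=
  τ.preimage Sum.inl Sum.inl_injective.injOn

noncomputable def pB (τ : Finset (Fin m ⊕ Fin m)) : Finset (Fin m) :=
  τ.preimage Sum.inr Sum.inr_injective.injOn

@[simp] lemma mem_pA {τ : Finset (Fin m ⊕ Fin m)} {x : Fin m} : x ∈ pA τ ↔ Sum.inl x ∈ τ :=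
  Finset.mem_preimage

@[simp] lemma mem_pB {τ : Finset (Fin m ⊕ Fin m)} {x : Fin m} : x ∈ pB τ ↔ Sum.inr x ∈ τ :=
  Finset.mem_preimage

lemma decomp (τ : Finset (Fin m ⊕ Fin m)) :
    τ = (pA τ).map (inlEmb m) ∪ (pB τ).map (inrEmb m) := by
  ext x
  cases x with
  | inl a => simp [inlEmb, inrEmb]
  | inr b => simp [inlEmb, inrEmb]

lemma minNonFace_inl (hK : IsComplex K) (hKne : K ≠ Set.univ)
    {τ : Finset (Fin m)} (h : IsMinNonFace K τ) :
    IsMinNonFace (bier K) (τ.map (inlEmb m)) := by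
  constructor
  · intro hmem
    rw [show τ.map (inlEmb m) = τ.map (inlEmb m) ∪ (∅ : Finset (Fin m)).map (inrEmb m) by simp]
      at hmem
    exact h.1 (map_mem_bier_iff.1 hmem).1
  · intro ρ hρ
    obtain ⟨ρ₀, hsub, rfl⟩ := Finset.subset_map_iff.1 hρ.subset
    have hss : ρ₀ ⊂ τ := by
      refine ⟨hsub, fun hc => hρ.ne ?_⟩
      exact congrArg _ (le_antisymm hsub hc)
    rw [show ρ₀.map (inlEmb m) = ρ₀.map (inlEmb m) ∪ (∅ : Finset (Fin m)).map (inrEmb m) by simp]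
    exact map_mem_bier_iff.2 ⟨h.2 ρ₀ hss, empty_mem_dual hK hKne, by simp⟩

lemma minNonFace_inr (hK : IsComplex K) (hKne : K ≠ Set.univ)
    {σ : Finset (Fin m)} (h : IsFacet K σ) :
    IsMinNonFace (bier K) (σᶜ.map (inrEmb m)) := by
  constructor
  · intro hmem
    rw [show σᶜ.map (inrEmb m) = (∅ : Finset (Fin m)).map (inlEmb m) ∪ σᶜ.map (inrEmb m) by simp]
      at hmem
    have := (map_mem_bier_iff.1 hmem).2.1
    simp only [dual, Set.mem_setOf_eq, compl_compl] at this
    exact this h.1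
  · intro ρ hρ
    obtain ⟨C, hsub, rfl⟩ := Finset.subset_map_iff.1 hρ.subset
    have hss : C ⊂ σᶜ := by
      refine ⟨hsub, fun hc => hρ.ne ?_⟩
      exact congrArg _ (le_antisymm hsub hc)
    have hC : C ∈ dual K := by
      simp only [dual, Set.mem_setOf_eq]
      intro hc
      have h1 : σ ⊆ Cᶜ := by
        rw [← compl_compl σ]
        exact Finset.compl_subset_compl.2 hss.subset
      have h2 := h.2 _ hc h1
      apply hss.ne
      rw [h2, compl_compl]
    rw [show C.map (inrEmb m) = (∅ : Finset (Fin m)).map (inlEmb m) ∪ C.map (inrEmb m) by simp]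
    exact map_mem_bier_iff.2 ⟨hK.1, hC, by simp⟩

lemma pA_erase_inr (τ : Finset (Fin m ⊕ Fin m)) (b : Fin m) :
    pA (τ.erase (Sum.inr b)) = pA τ := by
  ext x; simp

lemma pB_erase_inl (τ : Finset (Fin m ⊕ Fin m)) (a : Fin m) :
    pB (τ.erase (Sum.inl a)) = pB τ := by
  ext x; simp

theorem bierFlag_iff (hK : IsComplex K) (hKne : K ≠ Set.univ) :
    IsFlag (bier K) ↔ IsFlag K ∧ ∀ σ, IsFacet K σ → σᶜ.card ≤ 2 := by
  constructor
  · intro hB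
    constructor
    · intro τ hτ
      have := hB _ (minNonFace_inl hK hKne hτ)
      simpa using this
    · intro σ hσ
      have := hB _ (minNonFace_inr hK hKne hσ)
      simpa using this
  · rintro ⟨hflag, hfacet⟩
    intro τ hτ
    set A := pA τ with hA
    set B := pB τ with hB
    by_cases hd : Disjoint A B
    · by_cases hBe : B = ∅
      · have hτA : τ = A.map (inlEmb m) := by
          rw [decomp τ, ← hA, ← hB, hBe]; simp
        have hAK : A ∉ K := by
          intro hc
          apply hτ.1
          rw [hτA,
            show A.map (inlEmb m) = A.map (inlEmb m) ∪ (∅ : Finset (Fin m)).map (inrEmb m) by simp]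
          exact map_mem_bier_iff.2 ⟨hc, empty_mem_dual hK hKne, by simp⟩
        have hmnf : IsMinNonFace K A := by
          refine ⟨hAK, fun ρ hρ => ?_⟩
          have hρτ : ρ.map (inlEmb m) ⊂ τ := by
            rw [hτA]
            exact Finset.map_ssubset_map.2 hρ
          have := hτ.2 _ hρτ
          rw [show ρ.map (inlEmb m) = ρ.map (inlEmb m) ∪ (∅ : Finset (Fin m)).map (inrEmb m)
            by simp] at this
          exact (map_mem_bier_iff.1 this).1
        have := hflag _ hmnf
        rw [hτA]; simpa using this
      · by_cases hAe : A = ∅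
        · have hτB : τ = B.map (inrEmb m) := by
            rw [decomp τ, ← hA, ← hB, hAe]; simp
          have hBd : B ∉ dual K := by
            intro hc
            apply hτ.1
            rw [hτB,
              show B.map (inrEmb m) = (∅ : Finset (Fin m)).map (inlEmb m) ∪ B.map (inrEmb m)
              by simp]
            exact map_mem_bier_iff.2 ⟨hK.1, hc, by simp⟩
          simp only [dual, Set.mem_setOf_eq, not_not] at hBd
          have hfct : IsFacet K Bᶜ := by
            refine ⟨hBd, fun ρ hρ hsub => ?_⟩
            by_contra hne
            have h3 : ρᶜ ⊆ B := by
              rw [← compl_compl B]; exact Finset.compl_subset_compl.2 hsub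
            have hss : ρᶜ ⊂ B := by
              refine ⟨h3, fun hc => hne ?_⟩
              have h4 : ρᶜ = B := le_antisymm h3 hc
              rw [← h4, compl_compl]
            have hρτ : ρᶜ.map (inrEmb m) ⊂ τ := by
              rw [hτB]; exact Finset.map_ssubset_map.2 hss
            have hmem := hτ.2 _ hρτ
            rw [show ρᶜ.map (inrEmb m) = (∅ : Finset (Fin m)).map (inlEmb m) ∪ ρᶜ.map (inrEmb m)
              by simp] at hmem
            have := (map_mem_bier_iff.1 hmem).2.1
            simp only [dual, Set.mem_setOf_eq, compl_compl] at this
            exact this hρ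
          have := hfacet _ hfct
          rw [compl_compl] at this
          rw [hτB]; simpa using this
        · exfalso
          obtain ⟨a, ha⟩ := Finset.nonempty_iff_ne_empty.2 hAe
          obtain ⟨b, hb⟩ := Finset.nonempty_iff_ne_empty.2 hBe
          have hbτ : Sum.inr b ∈ τ := mem_pB.1 hb
          have haτ : Sum.inl a ∈ τ := mem_pA.1 ha
          have h1 : τ.erase (Sum.inr b) ⊂ τ := Finset.erase_ssubset hbτ
          have h2 : τ.erase (Sum.inl a) ⊂ τ := Finset.erase_ssubset haτ
          have m1 := hτ.2 _ h1
          have m2 := hτ.2 _ h2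
          rw [decomp (τ.erase (Sum.inr b)), pA_erase_inr] at m1
          rw [decomp (τ.erase (Sum.inl a)), pB_erase_inl] at m2
          have hAK : A ∈ K := (map_mem_bier_iff.1 m1).1
          have hBK : B ∈ dual K := (map_mem_bier_iff.1 m2).2.1
          apply hτ.1
          rw [decomp τ]
          exact map_mem_bier_iff.2 ⟨hAK, hBK, hd⟩
    · rw [Finset.not_disjoint_iff] at hd
      obtain ⟨i, hiA, hiB⟩ := hd
      have hpair : ({Sum.inl i, Sum.inr i} : Finset (Fin m ⊕ Fin m)) ⊆ τ := by
        intro x hx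
        simp only [Finset.mem_insert, Finset.mem_singleton] at hx
        rcases hx with rfl | rfl
        · exact mem_pA.1 hiA
        · exact mem_pB.1 hiB
      have hpeq : ({Sum.inl i, Sum.inr i} : Finset (Fin m ⊕ Fin m)) =
          ({i} : Finset (Fin m)).map (inlEmb m) ∪ ({i} : Finset (Fin m)).map (inrEmb m) := by
        ext x
        cases x with
        | inl a => simp [inlEmb, inrEmb]
        | inr b => simp [inlEmb, inrEmb]
      have hnf : ({Sum.inl i, Sum.inr i} : Finset (Fin m ⊕ Fin m)) ∉ bier K := by
        rw [hpeq]
        intro hc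
        have := (map_mem_bier_iff.1 hc).2.2
        simp at this
      have hτeq : τ = ({Sum.inl i, Sum.inr i} : Finset (Fin m ⊕ Fin m)) := by
        by_contra hne
        exact hnf (hτ.2 _ ⟨hpair, fun hc => hne (le_antisymm hc hpair)⟩)
      rw [hτeq]
      rw [Finset.card_insert_of_notMem (by simp), Finset.card_singleton]

end StepA

section Classify

variable {m : ℕ} {K : Set (Finset (Fin m))} {W : Finset (Fin m)}

lemma minNonFace_subset_W
    (hW : ∀ x : Fin m, x ∈ W ↔ ∃ σ : Finset (Fin m), IsMinNonFace K σ ∧ x ∈ σ)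
    {σ : Finset (Fin m)} (h : IsMinNonFace K σ) : σ ⊆ W :=
  fun x hx => (hW x).2 ⟨σ, h, hx⟩

lemma nonedge_mem_W (hK : IsComplex K) (hghost : ∀ i : Fin m, ({i} : Finset (Fin m)) ∈ K)
    (hW : ∀ x : Fin m, x ∈ W ↔ ∃ σ : Finset (Fin m), IsMinNonFace K σ ∧ x ∈ σ)
    {x y : Fin m} (hxy : x ≠ y) (h : ({x, y} : Finset (Fin m)) ∉ K) : x ∈ W ∧ y ∈ W := by
  have hmnf := pair_minNonFace hK hghost hxy h
  have hs := minNonFace_subset_W hW hmnf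
  exact ⟨hs (by simp), hs (by simp)⟩

lemma two_le_W_card (hK : IsComplex K) (hKne : K ≠ Set.univ)
    (hghost : ∀ i : Fin m, ({i} : Finset (Fin m)) ∈ K)
    (hW : ∀ x : Fin m, x ∈ W ↔ ∃ σ : Finset (Fin m), IsMinNonFace K σ ∧ x ∈ σ) :
    2 ≤ W.card := by
  obtain ⟨σ, hσ⟩ := Set.ne_univ_iff_exists_notMem K |>.1 hKne
  obtain ⟨τ, _, hτ⟩ := exists_minNonFace K hK σ hσ
  calc 2 ≤ τ.card := minNonFace_card_ge hK hghost hτ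
    _ ≤ W.card := Finset.card_le_card (minNonFace_subset_W hW hτ)

lemma three_dom (hK : IsComplex K) (hfacet : ∀ σ, IsFacet K σ → σᶜ.card ≤ 2)
    {I : Finset (Fin m)} (hI : I ∈ K) {w1 w2 w3 : Fin m}
    (h12 : w1 ≠ w2) (h13 : w1 ≠ w3) (h23 : w2 ≠ w3)
    (hd : ∀ w ∈ ({w1, w2, w3} : Finset (Fin m)), ∃ z ∈ I, z ≠ w ∧ ({z, w} : Finset (Fin m)) ∉ K) :
    False := by
  obtain ⟨τ, hτ, hIτ⟩ := exists_facet hK hI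
  have hout : ∀ w ∈ ({w1, w2, w3} : Finset (Fin m)), w ∉ τ := by
    intro w hw hwτ
    obtain ⟨z, hz, hzw, hne⟩ := hd w hw
    apply hne
    apply hK.2 _ hτ.1
    intro u hu
    simp only [Finset.mem_insert, Finset.mem_singleton] at hu
    rcases hu with rfl | rfl
    · exact hIτ hz
    · exact hwτ
  have hsub : ({w1, w2, w3} : Finset (Fin m)) ⊆ τᶜ := by
    intro w hw
    simp only [Finset.mem_compl]
    exact hout w hw
  have hcard : ({w1, w2, w3} : Finset (Fin m)).card = 3 := by
    rw [Finset.card_insert_of_notMem (by simp [h12, h13]),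
      Finset.card_insert_of_notMem (by simp [h23]), Finset.card_singleton]
  have := Finset.card_le_card hsub
  have := hfacet τ hτ
  omega

lemma W_nonedge (hK : IsComplex K) (hghost : ∀ i : Fin m, ({i} : Finset (Fin m)) ∈ K)
    (hW : ∀ x : Fin m, x ∈ W ↔ ∃ σ : Finset (Fin m), IsMinNonFace K σ ∧ x ∈ σ)
    (hflag : IsFlag K) {w : Fin m} (hw : w ∈ W) :
    ∃ y ∈ W, y ≠ w ∧ ({w, y} : Finset (Fin m)) ∉ K := by
  obtain ⟨σ, hσ, hwσ⟩ := (hW w).1 hw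
  have h2 : σ.card = 2 := le_antisymm (hflag σ hσ) (minNonFace_card_ge hK hghost hσ)
  obtain ⟨x, y, hxy, rfl⟩ := Finset.card_eq_two.1 h2
  have hsub := minNonFace_subset_W hW hσ
  simp only [Finset.mem_insert, Finset.mem_singleton] at hwσ
  rcases hwσ with rfl | rfl
  · exact ⟨y, hsub (by simp), hxy.symm, hσ.1⟩
  · refine ⟨x, hsub (by simp), hxy, ?_⟩
    rw [Finset.pair_comm]
    exact hσ.1

/-- the set of non-neighbours of `v` inside `W` -/
noncomputable def NN (K : Set (Finset (Fin m))) (W : Finset (Fin m)) (v : Fin m) :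
    Finset (Fin m) :=
  W.filter (fun y => y ≠ v ∧ ({v, y} : Finset (Fin m)) ∉ K)

lemma mem_NN {v y : Fin m} :
    y ∈ NN K W v ↔ y ∈ W ∧ y ≠ v ∧ ({v, y} : Finset (Fin m)) ∉ K := by
  simp [NN]

lemma NN_nonempty (hK : IsComplex K) (hghost : ∀ i : Fin m, ({i} : Finset (Fin m)) ∈ K)
    (hW : ∀ x : Fin m, x ∈ W ↔ ∃ σ : Finset (Fin m), IsMinNonFace K σ ∧ x ∈ σ)
    (hflag : IsFlag K) {v : Fin m} (hv : v ∈ W) : (NN K W v).Nonempty := by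
  obtain ⟨y, hy, hyv, hne⟩ := W_nonedge hK hghost hW hflag hv
  exact ⟨y, mem_NN.2 ⟨hy, hyv, hne⟩⟩

lemma card_le_two_of_no_three_dom (hK : IsComplex K)
    (hfacet : ∀ σ, IsFacet K σ → σᶜ.card ≤ 2)
    {I : Finset (Fin m)} (hI : I ∈ K) {D : Finset (Fin m)}
    (hD : ∀ w ∈ D, ∃ z ∈ I, z ≠ w ∧ ({z, w} : Finset (Fin m)) ∉ K) : D.card ≤ 2 := by
  by_contra hc
  push_neg at hc
  obtain ⟨T, hTD, hT3⟩ := Finset.exists_subset_card_eq hc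
  obtain ⟨w1, w2, w3, h12, h13, h23, rfl⟩ := Finset.card_eq_three.1 hT3
  exact three_dom hK hfacet hI h12 h13 h23 (fun w hw => hD w (hTD hw))

lemma W_card_le_four (hK : IsComplex K) (hKne : K ≠ Set.univ)
    (hghost : ∀ i : Fin m, ({i} : Finset (Fin m)) ∈ K)
    (hW : ∀ x : Fin m, x ∈ W ↔ ∃ σ : Finset (Fin m), IsMinNonFace K σ ∧ x ∈ σ)
    (hflag : IsFlag K) (hfacet : ∀ σ, IsFacet K σ → σᶜ.card ≤ 2) :
    W.card ≤ 4 := by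
  by_contra hc
  push_neg at hc
  have hWpos : 0 < W.card := by omega
  obtain ⟨v1, hv1⟩ := Finset.card_pos.1 hWpos
  have hN1 : (NN K W v1).card ≤ 2 :=
    card_le_two_of_no_three_dom hK hfacet (hghost v1)
      (fun w hw => ⟨v1, by simp, fun h => (mem_NN.1 hw).2.1 h.symm, (mem_NN.1 hw).2.2⟩)
  have hex2 : (W \ insert v1 (NN K W v1)).Nonempty := by
    rw [← Finset.card_pos]
    have h1 : (insert v1 (NN K W v1)).card ≤ 3 := (Finset.card_insert_le _ _).trans (by omega)
    have := Finset.le_card_sdiff (insert v1 (NN K W v1)) W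
    omega
  obtain ⟨v2, hv2'⟩ := hex2
  rw [Finset.mem_sdiff, Finset.mem_insert, not_or] at hv2'
  obtain ⟨hv2W, hv21, hv2N⟩ := hv2'
  have e12 : ({v1, v2} : Finset (Fin m)) ∈ K := by
    by_contra h
    exact hv2N (mem_NN.2 ⟨hv2W, hv21, h⟩)
  have hDdom : ∀ w ∈ NN K W v1 ∪ NN K W v2,
      ∃ z ∈ ({v1, v2} : Finset (Fin m)), z ≠ w ∧ ({z, w} : Finset (Fin m)) ∉ K := by
    intro w hw
    rcases Finset.mem_union.1 hw with h | h
    · exact ⟨v1, by simp, fun hh => (mem_NN.1 h).2.1 hh.symm, (mem_NN.1 h).2.2⟩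
    · exact ⟨v2, by simp, fun hh => (mem_NN.1 h).2.1 hh.symm, (mem_NN.1 h).2.2⟩
  have hD2 : (NN K W v1 ∪ NN K W v2).card ≤ 2 :=
    card_le_two_of_no_three_dom hK hfacet e12 hDdom
  have hex3 : (W \ insert v1 (insert v2 (NN K W v1 ∪ NN K W v2))).Nonempty := by
    rw [← Finset.card_pos]
    have h1 : (insert v1 (insert v2 (NN K W v1 ∪ NN K W v2))).card ≤ 4 :=
      (Finset.card_insert_le _ _).trans (by
        have := Finset.card_insert_le v2 (NN K W v1 ∪ NN K W v2); omega)
    have := Finset.le_card_sdiff (insert v1 (insert v2 (NN K W v1 ∪ NN K W v2))) W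
    omega
  obtain ⟨v3, hv3'⟩ := hex3
  rw [Finset.mem_sdiff, Finset.mem_insert, Finset.mem_insert, not_or, not_or] at hv3'
  obtain ⟨hv3W, hv31, hv32, hv3D⟩ := hv3'
  have hv3N1 : v3 ∉ NN K W v1 := fun h => hv3D (Finset.mem_union_left _ h)
  have hv3N2 : v3 ∉ NN K W v2 := fun h => hv3D (Finset.mem_union_right _ h)
  have e13 : ({v1, v3} : Finset (Fin m)) ∈ K := by
    by_contra h; exact hv3N1 (mem_NN.2 ⟨hv3W, hv31, h⟩)
  have e23 : ({v2, v3} : Finset (Fin m)) ∈ K := by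
    by_contra h; exact hv3N2 (mem_NN.2 ⟨hv3W, hv32, h⟩)
  have hI3 : ({v1, v2, v3} : Finset (Fin m)) ∈ K := by
    apply flag_clique hK hghost hflag
    intro x hx y hy hxy
    simp only [Finset.mem_insert, Finset.mem_singleton] at hx hy
    rcases hx with rfl | rfl | rfl <;> rcases hy with rfl | rfl | rfl <;>
      first
        | exact absurd rfl hxy
        | exact e12 | exact e13 | exact e23
        | (rw [Finset.pair_comm]; first | exact e12 | exact e13 | exact e23)
  set D3 := NN K W v1 ∪ NN K W v2 ∪ NN K W v3 with hD3def
  have hD3dom : ∀ w ∈ D3,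
      ∃ z ∈ ({v1, v2, v3} : Finset (Fin m)), z ≠ w ∧ ({z, w} : Finset (Fin m)) ∉ K := by
    intro w hw
    rcases Finset.mem_union.1 hw with h | h
    · rcases Finset.mem_union.1 h with h' | h'
      · exact ⟨v1, by simp, fun hh => (mem_NN.1 h').2.1 hh.symm, (mem_NN.1 h').2.2⟩
      · exact ⟨v2, by simp, fun hh => (mem_NN.1 h').2.1 hh.symm, (mem_NN.1 h').2.2⟩
    · exact ⟨v3, by simp, fun hh => (mem_NN.1 h).2.1 hh.symm, (mem_NN.1 h).2.2⟩
  have hD3card : D3.card ≤ 2 := card_le_two_of_no_three_dom hK hfacet hI3 hD3dom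
  have hsub1 : NN K W v1 ⊆ D3 := fun x hx =>
    Finset.mem_union_left _ (Finset.mem_union_left _ hx)
  have hsub2 : NN K W v2 ⊆ D3 := fun x hx =>
    Finset.mem_union_left _ (Finset.mem_union_right _ hx)
  have hsub3 : NN K W v3 ⊆ D3 := fun x hx => Finset.mem_union_right _ hx
  obtain ⟨y1, hy1⟩ := NN_nonempty hK hghost hW hflag hv1
  obtain ⟨y2, hy2⟩ := NN_nonempty hK hghost hW hflag hv2W
  obtain ⟨y3, hy3⟩ := NN_nonempty hK hghost hW hflag hv3W
  have hviD3 : ∀ v ∈ ({v1, v2, v3} : Finset (Fin m)), v ∉ D3 := by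
    intro v hv hvD
    obtain ⟨z, hz, hzv, hne⟩ := hD3dom v hvD
    simp only [Finset.mem_insert, Finset.mem_singleton] at hv hz
    apply hne
    rcases hz with rfl | rfl | rfl <;> rcases hv with rfl | rfl | rfl <;>
      first
        | exact absurd rfl hzv
        | exact e12 | exact e13 | exact e23
        | (rw [Finset.pair_comm]; first | exact e12 | exact e13 | exact e23)
  have hD3pos : 0 < D3.card := Finset.card_pos.2 ⟨y1, hsub1 hy1⟩
  interval_cases hcD3 : D3.card
  · -- card 1 : D3 = {p}
    obtain ⟨p, hp⟩ := Finset.card_eq_one.1 hcD3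
    have h1 : p ∈ NN K W v1 := by
      have h := hsub1 hy1; rw [hp, Finset.mem_singleton] at h; rwa [h] at hy1
    have h2 : p ∈ NN K W v2 := by
      have h := hsub2 hy2; rw [hp, Finset.mem_singleton] at h; rwa [h] at hy2
    have h3 : p ∈ NN K W v3 := by
      have h := hsub3 hy3; rw [hp, Finset.mem_singleton] at h; rwa [h] at hy3
    apply three_dom hK hfacet (hghost p) (Ne.symm hv21) (Ne.symm hv31) (Ne.symm hv32)
    intro w hw
    simp only [Finset.mem_insert, Finset.mem_singleton] at hw
    refine ⟨p, by simp, ?_⟩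
    rcases hw with rfl | rfl | rfl
    · exact ⟨(mem_NN.1 h1).2.1, by rw [Finset.pair_comm]; exact (mem_NN.1 h1).2.2⟩
    · exact ⟨(mem_NN.1 h2).2.1, by rw [Finset.pair_comm]; exact (mem_NN.1 h2).2.2⟩
    · exact ⟨(mem_NN.1 h3).2.1, by rw [Finset.pair_comm]; exact (mem_NN.1 h3).2.2⟩
  · -- card 2 : D3 = {p, q}
    obtain ⟨p, q, hpq, hD3eq⟩ := Finset.card_eq_two.1 hcD3
    by_cases hpqK : ({p, q} : Finset (Fin m)) ∈ K
    · apply three_dom hK hfacet hpqK (Ne.symm hv21) (Ne.symm hv31) (Ne.symm hv32)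
      intro w hw
      simp only [Finset.mem_insert, Finset.mem_singleton] at hw
      rcases hw with rfl | rfl | rfl
      · refine ⟨y1, by rw [← hD3eq]; exact hsub1 hy1, (mem_NN.1 hy1).2.1, ?_⟩
        rw [Finset.pair_comm]; exact (mem_NN.1 hy1).2.2
      · refine ⟨y2, by rw [← hD3eq]; exact hsub2 hy2, (mem_NN.1 hy2).2.1, ?_⟩
        rw [Finset.pair_comm]; exact (mem_NN.1 hy2).2.2
      · refine ⟨y3, by rw [← hD3eq]; exact hsub3 hy3, (mem_NN.1 hy3).2.1, ?_⟩
        rw [Finset.pair_comm]; exact (mem_NN.1 hy3).2.2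
    · have final : ∀ z o u v : Fin m, u ≠ v → u ∉ D3 → v ∉ D3 → z ∈ D3 → o ∈ D3 → z ≠ o →
          z ∈ NN K W u → z ∈ NN K W v → False := by
        intro z o u v huv huD hvD hzD hoD hzo hzu hzv
        have hzoK : ({z, o} : Finset (Fin m)) ∉ K := by
          rw [hD3eq] at hzD hoD
          simp only [Finset.mem_insert, Finset.mem_singleton] at hzD hoD
          rcases hzD with rfl | rfl <;> rcases hoD with rfl | rfl
          · exact absurd rfl hzo
          · exact hpqK
          · rw [Finset.pair_comm]; exact hpqK
          · exact absurd rfl hzo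
        have huo : u ≠ o := fun h => huD (h ▸ hoD)
        have hvo : v ≠ o := fun h => hvD (h ▸ hoD)
        apply three_dom hK hfacet (hghost z) huv huo hvo
        intro w hw
        simp only [Finset.mem_insert, Finset.mem_singleton] at hw
        refine ⟨z, by simp, ?_⟩
        rcases hw with rfl | rfl | rfl
        · exact ⟨fun h => huD (h ▸ hzD), by rw [Finset.pair_comm]; exact (mem_NN.1 hzu).2.2⟩
        · exact ⟨fun h => hvD (h ▸ hzD), by rw [Finset.pair_comm]; exact (mem_NN.1 hzv).2.2⟩
        · exact ⟨hzo, hzoK⟩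
      have hm1 : y1 = p ∨ y1 = q := by
        have := hsub1 hy1; rw [hD3eq] at this; simpa using this
      have hm2 : y2 = p ∨ y2 = q := by
        have := hsub2 hy2; rw [hD3eq] at this; simpa using this
      have hm3 : y3 = p ∨ y3 = q := by
        have := hsub3 hy3; rw [hD3eq] at this; simpa using this
      have hpD3 : p ∈ D3 := by rw [hD3eq]; simp
      have hqD3 : q ∈ D3 := by rw [hD3eq]; simp
      have hnv1 : v1 ∉ D3 := hviD3 v1 (by simp)
      have hnv2 : v2 ∉ D3 := hviD3 v2 (by simp)
      have hnv3 : v3 ∉ D3 := hviD3 v3 (by simp)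
      rcases hm1 with h1 | h1 <;> rcases hm2 with h2 | h2 <;> rcases hm3 with h3 | h3
      · exact final p q v1 v2 (Ne.symm hv21) hnv1 hnv2 hpD3 hqD3 hpq (h1 ▸ hy1) (h2 ▸ hy2)
      · exact final p q v1 v2 (Ne.symm hv21) hnv1 hnv2 hpD3 hqD3 hpq (h1 ▸ hy1) (h2 ▸ hy2)
      · exact final p q v1 v3 (Ne.symm hv31) hnv1 hnv3 hpD3 hqD3 hpq (h1 ▸ hy1) (h3 ▸ hy3)
      · exact final q p v2 v3 (Ne.symm hv32) hnv2 hnv3 hqD3 hpD3 (Ne.symm hpq) (h2 ▸ hy2)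
          (h3 ▸ hy3)
      · exact final p q v2 v3 (Ne.symm hv32) hnv2 hnv3 hpD3 hqD3 hpq (h2 ▸ hy2) (h3 ▸ hy3)
      · exact final q p v1 v3 (Ne.symm hv31) hnv1 hnv3 hqD3 hpD3 (Ne.symm hpq) (h1 ▸ hy1)
          (h3 ▸ hy3)
      · exact final q p v1 v2 (Ne.symm hv21) hnv1 hnv2 hqD3 hpD3 (Ne.symm hpq) (h1 ▸ hy1)
          (h2 ▸ hy2)
      · exact final q p v1 v2 (Ne.symm hv21) hnv1 hnv2 hqD3 hpD3 (Ne.symm hpq) (h1 ▸ hy1)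
          (h2 ▸ hy2)

lemma pair_eq_pair_iff {x y u v : Fin m} :
    ({x, y} : Finset (Fin m)) = {u, v} ↔ (x = u ∧ y = v) ∨ (x = v ∧ y = u) := by
  constructor
  · intro h
    have hx : x = u ∨ x = v := by
      have hh : x ∈ ({u, v} : Finset (Fin m)) := h ▸ (by simp); simpa using hh
    have hy : y = u ∨ y = v := by
      have hh : y ∈ ({u, v} : Finset (Fin m)) := h ▸ (by simp); simpa using hh
    have hu : u = x ∨ u = y := by
      have hh : u ∈ ({x, y} : Finset (Fin m)) := by rw [h]; simp
      simpa using hh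
    have hv : v = x ∨ v = y := by
      have hh : v ∈ ({x, y} : Finset (Fin m)) := by rw [h]; simp
      simpa using hh
    rcases hx with hxu | hxv
    · rcases hy with hyu | hyv
      · rcases hv with hvx | hvy
        · exact Or.inl ⟨hxu, hyu.trans (hvx.trans hxu).symm⟩
        · exact Or.inl ⟨hxu, hvy.symm⟩
      · exact Or.inl ⟨hxu, hyv⟩
    · rcases hy with hyu | hyv
      · exact Or.inr ⟨hxv, hyu⟩
      · rcases hu with hux | huy
        · exact Or.inr ⟨hxv, hyv.trans (hux.trans hxv).symm⟩
        · exact Or.inr ⟨hxv, huy.symm⟩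
  · rintro (⟨rfl, rfl⟩ | ⟨rfl, rfl⟩)
    · rfl
    · exact Finset.pair_comm x y

lemma facet_out (hK : IsComplex K)
    (hW : ∀ x : Fin m, x ∈ W ↔ ∃ σ : Finset (Fin m), IsMinNonFace K σ ∧ x ∈ σ)
    {σ : Finset (Fin m)} (hσ : IsFacet K σ) {w : Fin m} (hw : w ∉ σ) :
    ∃ ρ, IsMinNonFace K ρ ∧ w ∈ ρ ∧ ρ ⊆ insert w σ ∧ ρ ⊆ W := by
  have hins : insert w σ ∉ K := by
    intro hc
    have := hσ.2 _ hc (Finset.subset_insert w σ)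
    exact hw (this ▸ Finset.mem_insert_self w σ)
  obtain ⟨ρ, hρsub, hρ⟩ := exists_minNonFace K hK _ hins
  have hwρ : w ∈ ρ := by
    by_contra hwρ
    have : ρ ⊆ σ := fun x hx => by
      rcases Finset.mem_insert.1 (hρsub hx) with rfl | h
      · exact absurd hx hwρ
      · exact h
    exact hρ.1 (hK.2 _ hσ.1 _ this)
  exact ⟨ρ, hρ, hwρ, hρsub, minNonFace_subset_W hW hρ⟩

lemma facet_compl_subset_W (hK : IsComplex K)
    (hW : ∀ x : Fin m, x ∈ W ↔ ∃ σ : Finset (Fin m), IsMinNonFace K σ ∧ x ∈ σ)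
    {σ : Finset (Fin m)} (hσ : IsFacet K σ) : σᶜ ⊆ W := by
  intro w hw
  obtain ⟨ρ, _, hwρ, _, hρW⟩ := facet_out hK hW hσ (Finset.mem_compl.1 hw)
  exact hρW hwρ

lemma facet_out_flag (hK : IsComplex K)
    (hghost : ∀ i : Fin m, ({i} : Finset (Fin m)) ∈ K)
    (hW : ∀ x : Fin m, x ∈ W ↔ ∃ σ : Finset (Fin m), IsMinNonFace K σ ∧ x ∈ σ)
    (hflag : IsFlag K)
    {σ : Finset (Fin m)} (hσ : IsFacet K σ) {w : Fin m} (hw : w ∉ σ) :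
    ∃ v ∈ σ, v ∈ W ∧ v ≠ w ∧ ({v, w} : Finset (Fin m)) ∉ K := by
  obtain ⟨ρ, hρ, hwρ, hρins, hρW⟩ := facet_out hK hW hσ hw
  have h2 : ρ.card = 2 := le_antisymm (hflag ρ hρ) (minNonFace_card_ge hK hghost hρ)
  obtain ⟨x, y, hxy, rfl⟩ := Finset.card_eq_two.1 h2
  simp only [Finset.mem_insert, Finset.mem_singleton] at hwρ
  rcases hwρ with rfl | rfl
  · have hyσ : y ∈ σ := by
      rcases Finset.mem_insert.1 (hρins (show y ∈ ({w, y} : Finset (Fin m)) by simp)) with h | h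
      · exact absurd h (Ne.symm hxy)
      · exact h
    refine ⟨y, hyσ, hρW (by simp), Ne.symm hxy, ?_⟩
    rw [Finset.pair_comm]; exact hρ.1
  · have hxσ : x ∈ σ := by
      rcases Finset.mem_insert.1 (hρins (show x ∈ ({x, w} : Finset (Fin m)) by simp)) with h | h
      · exact absurd h hxy
      · exact h
    exact ⟨x, hxσ, hρW (by simp), hxy, hρ.1⟩

lemma back_flag (hK : IsComplex K) (hghost : ∀ i : Fin m, ({i} : Finset (Fin m)) ∈ K)
    (hW : ∀ x : Fin m, x ∈ W ↔ ∃ σ : Finset (Fin m), IsMinNonFace K σ ∧ x ∈ σ)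
    (htri : ∀ τ ⊆ W, τ.card = 3 → ∃ x ∈ τ, ∃ y ∈ τ, x ≠ y ∧ ({x, y} : Finset (Fin m)) ∉ K) :
    IsFlag K := by
  intro τ hτ
  by_contra hc
  push_neg at hc
  obtain ⟨τ', hτ'τ, hτ'3⟩ := Finset.exists_subset_card_eq (show 3 ≤ τ.card by omega)
  have hτ'W : τ' ⊆ W := hτ'τ.trans (minNonFace_subset_W hW hτ)
  obtain ⟨x, hx, y, hy, hxy, hne⟩ := htri τ' hτ'W hτ'3
  apply hne
  apply hτ.2
  constructor
  · intro z hz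
    simp only [Finset.mem_insert, Finset.mem_singleton] at hz
    rcases hz with rfl | rfl
    · exact hτ'τ hx
    · exact hτ'τ hy
  · intro hsub
    have h1 : τ.card ≤ ({x, y} : Finset (Fin m)).card := Finset.card_le_card hsub
    have h2 : ({x, y} : Finset (Fin m)).card ≤ 2 :=
      (Finset.card_insert_le _ _).trans (by simp)
    omega

lemma back_facet (hK : IsComplex K) (hghost : ∀ i : Fin m, ({i} : Finset (Fin m)) ∈ K)
    (hW : ∀ x : Fin m, x ∈ W ↔ ∃ σ : Finset (Fin m), IsMinNonFace K σ ∧ x ∈ σ)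
    (hflag : IsFlag K) (hWcard : W.card ≤ 4)
    (hedge : W.card = 4 → ∀ u ∈ W, ∃ y ∈ W, y ≠ u ∧ ({u, y} : Finset (Fin m)) ∈ K) :
    ∀ σ, IsFacet K σ → σᶜ.card ≤ 2 := by
  intro σ hσ
  by_contra hc
  push_neg at hc
  have hcW : σᶜ ⊆ W := facet_compl_subset_W hK hW hσ
  have hle : σᶜ.card ≤ W.card := Finset.card_le_card hcW
  have hT : (W \ σᶜ).card = W.card - σᶜ.card := by
    rw [Finset.card_sdiff_of_subset hcW]
  have hvT : ∀ w ∈ σᶜ, ∃ v ∈ W \ σᶜ, v ≠ w ∧ ({v, w} : Finset (Fin m)) ∉ K := by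
    intro w hw
    obtain ⟨v, hvσ, hvW, hvw, hne⟩ := facet_out_flag hK hghost hW hflag hσ (Finset.mem_compl.1 hw)
    exact ⟨v, Finset.mem_sdiff.2 ⟨hvW, fun hvc => (Finset.mem_compl.1 hvc) hvσ⟩, hvw, hne⟩
  rcases Nat.lt_or_ge (W.card - σᶜ.card) 1 with hT0 | hT1
  · -- W \ σᶜ is empty
    have : (W \ σᶜ) = ∅ := Finset.card_eq_zero.1 (by omega)
    obtain ⟨w, hw⟩ := Finset.card_pos.1 (show 0 < σᶜ.card by omega)
    obtain ⟨v, hv, -, -⟩ := hvT w hw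
    rw [this] at hv
    exact absurd hv (Finset.notMem_empty v)
  · -- W \ σᶜ = {u}, W.card = 4, σᶜ.card = 3
    have hW4 : W.card = 4 := by omega
    have hc3 : σᶜ.card = 3 := by omega
    have hT1' : (W \ σᶜ).card = 1 := by omega
    obtain ⟨u, hu⟩ := Finset.card_eq_one.1 hT1'
    have huW : u ∈ W := by
      have : u ∈ W \ σᶜ := hu ▸ Finset.mem_singleton_self u
      exact (Finset.mem_sdiff.1 this).1
    obtain ⟨y, hyW, hyu, hyK⟩ := hedge hW4 u huW
    have hyc : y ∈ σᶜ := by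
      by_contra hyc
      have : y ∈ W \ σᶜ := Finset.mem_sdiff.2 ⟨hyW, hyc⟩
      rw [hu, Finset.mem_singleton] at this
      exact hyu this
    obtain ⟨v, hv, hvy, hne⟩ := hvT y hyc
    rw [hu, Finset.mem_singleton] at hv
    subst hv
    exact hne hyK

def q1 : Fin 6 → Fin 4 := ![0, 0, 0, 1, 1, 2]
def q2 : Fin 6 → Fin 4 := ![1, 2, 3, 2, 3, 3]
def pidx : Fin 4 → Fin 4 → Fin 6 :=
  ![![0, 0, 1, 2], ![0, 0, 3, 4], ![1, 3, 0, 5], ![2, 4, 5, 0]]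

def pd (a b c d i j : Fin 4) : Prop :=
  (i = a ∧ j = b) ∨ (i = b ∧ j = a) ∨ (i = b ∧ j = c) ∨ (i = c ∧ j = b) ∨
  (i = c ∧ j = d) ∨ (i = d ∧ j = c)

def pe (a b c d i j : Fin 4) : Prop :=
  pd a b c d i j ∨ (i = d ∧ j = a) ∨ (i = a ∧ j = d)

def pf (a b c d i j : Fin 4) : Prop :=
  (i = a ∧ j = b) ∨ (i = b ∧ j = a) ∨ (i = c ∧ j = d) ∨ (i = d ∧ j = c)

instance (a b c d i j : Fin 4) : Decidable (pd a b c d i j) := by unfold pd; infer_instance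
instance (a b c d i j : Fin 4) : Decidable (pe a b c d i j) := by unfold pe; infer_instance
instance (a b c d i j : Fin 4) : Decidable (pf a b c d i j) := by unfold pf; infer_instance

set_option maxRecDepth 10000 in
lemma fin4_classify : ∀ e : Fin 6 → Bool,
    (∀ i : Fin 4, ∃ j, j ≠ i ∧ e (pidx i j) = false) →
    (∀ i : Fin 4, ∃ j, j ≠ i ∧ e (pidx i j) = true) →
    ∃ a b c d : Fin 4, a ≠ b ∧ a ≠ c ∧ a ≠ d ∧ b ≠ c ∧ b ≠ d ∧ c ≠ d ∧
      ((∀ i j : Fin 4, i ≠ j → (e (pidx i j) = true ↔ pd a b c d i j)) ∨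
       (∀ i j : Fin 4, i ≠ j → (e (pidx i j) = true ↔ pe a b c d i j)) ∨
       (∀ i j : Fin 4, i ≠ j → (e (pidx i j) = true ↔ pf a b c d i j))) := by
  decide

section Classify2

variable {m : ℕ} {K : Set (Finset (Fin m))} {W : Finset (Fin m)}

lemma forward_n3 (hK : IsComplex K) (hghost : ∀ i : Fin m, ({i} : Finset (Fin m)) ∈ K)
    (hW : ∀ x : Fin m, x ∈ W ↔ ∃ σ : Finset (Fin m), IsMinNonFace K σ ∧ x ∈ σ)
    (hflag : IsFlag K) (h3 : W.card = 3) :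
    (∀ x ∈ W, ∀ y ∈ W, x ≠ y → ({x, y} : Finset (Fin m)) ∉ K) ∨
    (∃ x ∈ W, ∃ y ∈ W, x ≠ y ∧ ({x, y} : Finset (Fin m)) ∈ K ∧
      ∀ p ∈ W, ∀ q ∈ W, p ≠ q → ({p, q} : Finset (Fin m)) ∈ K →
        ({p, q} : Finset (Fin m)) = {x, y}) := by
  by_cases hall : ∀ x ∈ W, ∀ y ∈ W, x ≠ y → ({x, y} : Finset (Fin m)) ∉ K
  · exact Or.inl hall
  · push_neg at hall
    obtain ⟨x, hx, y, hy, hxy, hxyK⟩ := hall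
    refine Or.inr ⟨x, hx, y, hy, hxy, hxyK, ?_⟩
    intro p hp q hq hpq hpqK
    by_contra hne
    have key : ∀ c u v : Fin m, c ∈ W → u ∈ W → v ∈ W → u ≠ c → v ≠ c → u ≠ v →
        ({c, u} : Finset (Fin m)) ∈ K → ({c, v} : Finset (Fin m)) ∈ K → False := by
      intro c u v hc hu hv huc hvc huv hcu hcv
      obtain ⟨t, htW, htc, htK⟩ := W_nonedge hK hghost hW hflag hc
      have hWeq : ({c, u, v} : Finset (Fin m)) = W := by
        apply Finset.eq_of_subset_of_card_le
        · intro z hz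
          simp only [Finset.mem_insert, Finset.mem_singleton] at hz
          rcases hz with rfl | rfl | rfl
          · exact hc
          · exact hu
          · exact hv
        · have : ({c, u, v} : Finset (Fin m)).card = 3 := by
            rw [Finset.card_insert_of_notMem (by simp [Ne.symm huc, Ne.symm hvc]),
              Finset.card_insert_of_notMem (by simp [huv]), Finset.card_singleton]
          omega
      have htm : t ∈ ({c, u, v} : Finset (Fin m)) := hWeq ▸ htW
      simp only [Finset.mem_insert, Finset.mem_singleton] at htm
      rcases htm with rfl | rfl | rfl
      · exact htc rfl
      · exact htK hcu
      · exact htK hcv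
    have hinter : (({x, y} : Finset (Fin m)) ∩ {p, q}).Nonempty := by
      rw [← Finset.card_pos]
      have hxyc : ({x, y} : Finset (Fin m)).card = 2 := Finset.card_pair hxy
      have hpqc : ({p, q} : Finset (Fin m)).card = 2 := Finset.card_pair hpq
      have huni : ({x, y} : Finset (Fin m)) ∪ {p, q} ⊆ W := by
        intro z hz
        rcases Finset.mem_union.1 hz with h | h <;>
          simp only [Finset.mem_insert, Finset.mem_singleton] at h
        · rcases h with rfl | rfl; exacts [hx, hy]
        · rcases h with rfl | rfl; exacts [hp, hq]
      have h1 := Finset.card_union_add_card_inter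
        ({x, y} : Finset (Fin m)) ({p, q} : Finset (Fin m))
      have h2 := Finset.card_le_card huni
      omega
    obtain ⟨c, hc⟩ := hinter
    rw [Finset.mem_inter] at hc
    have other : ∀ s t : Fin m, s ≠ t → c ∈ ({s, t} : Finset (Fin m)) →
        ∃ u, u ≠ c ∧ ({c, u} : Finset (Fin m)) = {s, t} := by
      intro s t hst hcm
      simp only [Finset.mem_insert, Finset.mem_singleton] at hcm
      rcases hcm with rfl | rfl
      · exact ⟨t, Ne.symm hst, rfl⟩
      · exact ⟨s, hst, Finset.pair_comm c s⟩
    obtain ⟨u, huc, hueq⟩ := other x y hxy hc.1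
    obtain ⟨v, hvc, hveq⟩ := other p q hpq hc.2
    have hcW : c ∈ W := by
      have := hc.1
      simp only [Finset.mem_insert, Finset.mem_singleton] at this
      rcases this with rfl | rfl; exacts [hx, hy]
    have huW : u ∈ W := by
      have : u ∈ ({x, y} : Finset (Fin m)) := hueq ▸ (by simp)
      simp only [Finset.mem_insert, Finset.mem_singleton] at this
      rcases this with rfl | rfl; exacts [hx, hy]
    have hvW : v ∈ W := by
      have : v ∈ ({p, q} : Finset (Fin m)) := hveq ▸ (by simp)
      simp only [Finset.mem_insert, Finset.mem_singleton] at this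
      rcases this with rfl | rfl; exacts [hp, hq]
    have huv : u ≠ v := by
      intro h
      apply hne
      rw [← hveq, ← h, hueq]
    exact key c u v hcW huW hvW huc hvc huv (hueq ▸ hxyK) (hveq ▸ hpqK)

end Classify2

end Classify

section Classify3

variable {m : ℕ} {K : Set (Finset (Fin m))} {W : Finset (Fin m)}

lemma card_eq_four' {s : Finset (Fin m)} (h : s.card = 4) :
    ∃ a b c d : Fin m, a ≠ b ∧ a ≠ c ∧ a ≠ d ∧ b ≠ c ∧ b ≠ d ∧ c ≠ d ∧ s = {a, b, c, d} := by
  obtain ⟨a, t, hat, rfl, ht⟩ := Finset.card_eq_succ.1 h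
  obtain ⟨b, c, d, hbc, hbd, hcd, rfl⟩ := Finset.card_eq_three.1 ht
  simp only [Finset.mem_insert, Finset.mem_singleton, not_or] at hat
  exact ⟨a, b, c, d, hat.1, hat.2.1, hat.2.2, hbc, hbd, hcd, rfl⟩

lemma pair_ne_left {x y u v : Fin m} (hxu : x ≠ u) (hxv : x ≠ v) :
    ({x, y} : Finset (Fin m)) ≠ {u, v} := by
  intro h
  rcases pair_eq_pair_iff.1 h with ⟨h1, -⟩ | ⟨h1, -⟩
  · exact hxu h1
  · exact hxv h1

lemma pair_ne_right {x y u v : Fin m} (hyu : y ≠ u) (hyv : y ≠ v) :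
    ({x, y} : Finset (Fin m)) ≠ {u, v} := by
  intro h
  rcases pair_eq_pair_iff.1 h with ⟨-, h2⟩ | ⟨-, h2⟩
  · exact hyv h2
  · exact hyu h2

lemma triple_cases {a b c d : Fin m} (h4 : W.card = 4) (hWeq : W = {a, b, c, d})
    (hab : a ≠ b) (hac : a ≠ c) (had : a ≠ d) (hbc : b ≠ c) (hbd : b ≠ d) (hcd : c ≠ d)
    {τ : Finset (Fin m)} (hsub : τ ⊆ W) (h3 : τ.card = 3) :
    ({b, c, d} : Finset (Fin m)) ⊆ τ ∨ ({a, c, d} : Finset (Fin m)) ⊆ τ ∨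
    ({a, b, d} : Finset (Fin m)) ⊆ τ ∨ ({a, b, c} : Finset (Fin m)) ⊆ τ := by
  have hdiff : (W \ τ).card = 1 := by
    rw [Finset.card_sdiff_of_subset hsub]; omega
  obtain ⟨x0, hx0⟩ := Finset.card_eq_one.1 hdiff
  have hmem : ∀ y ∈ W, y ≠ x0 → y ∈ τ := by
    intro y hy hne
    by_contra h
    have : y ∈ W \ τ := Finset.mem_sdiff.2 ⟨hy, h⟩
    rw [hx0, Finset.mem_singleton] at this
    exact hne this
  have hx0W : x0 ∈ W := (Finset.mem_sdiff.1 (hx0 ▸ Finset.mem_singleton_self x0)).1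
  have haW : a ∈ W := by rw [hWeq]; simp
  have hbW : b ∈ W := by rw [hWeq]; simp
  have hcW : c ∈ W := by rw [hWeq]; simp
  have hdW : d ∈ W := by rw [hWeq]; simp
  have hx04 : x0 = a ∨ x0 = b ∨ x0 = c ∨ x0 = d := by
    rw [hWeq] at hx0W; simpa using hx0W
  rcases hx04 with rfl | rfl | rfl | rfl
  · refine Or.inl ?_
    intro z hz
    simp only [Finset.mem_insert, Finset.mem_singleton] at hz
    rcases hz with rfl | rfl | rfl
    · exact hmem z hbW (Ne.symm hab)
    · exact hmem z hcW (Ne.symm hac)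
    · exact hmem z hdW (Ne.symm had)
  · refine Or.inr (Or.inl ?_)
    intro z hz
    simp only [Finset.mem_insert, Finset.mem_singleton] at hz
    rcases hz with rfl | rfl | rfl
    · exact hmem z haW hab
    · exact hmem z hcW (Ne.symm hbc)
    · exact hmem z hdW (Ne.symm hbd)
  · refine Or.inr (Or.inr (Or.inl ?_))
    intro z hz
    simp only [Finset.mem_insert, Finset.mem_singleton] at hz
    rcases hz with rfl | rfl | rfl
    · exact hmem z haW hac
    · exact hmem z hbW hbc
    · exact hmem z hdW (Ne.symm hcd)
  · refine Or.inr (Or.inr (Or.inr ?_))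
    intro z hz
    simp only [Finset.mem_insert, Finset.mem_singleton] at hz
    rcases hz with rfl | rfl | rfl
    · exact hmem z haW had
    · exact hmem z hbW hbd
    · exact hmem z hcW hcd

noncomputable def EE (K : Set (Finset (Fin m))) (f : Fin 4 → Fin m) : Fin 6 → Bool :=
  fun k => decide (({f (q1 k), f (q2 k)} : Finset (Fin m)) ∈ K)

lemma EE_eq_true {K : Set (Finset (Fin m))} {f : Fin 4 → Fin m} {k : Fin 6} :
    EE K f k = true ↔ ({f (q1 k), f (q2 k)} : Finset (Fin m)) ∈ K := by
  unfold EE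
  exact decide_eq_true_iff

set_option maxHeartbeats 1600000 in
lemma forward_n4 (hK : IsComplex K)
    (hghost : ∀ i : Fin m, ({i} : Finset (Fin m)) ∈ K)
    (hW : ∀ x : Fin m, x ∈ W ↔ ∃ σ : Finset (Fin m), IsMinNonFace K σ ∧ x ∈ σ)
    (hflag : IsFlag K) (hfacet : ∀ σ, IsFacet K σ → σᶜ.card ≤ 2) (h4 : W.card = 4) :
    (∃ a b c d : Fin m, W = {a, b, c, d} ∧
        ∀ x ∈ W, ∀ y ∈ W, x ≠ y →
          (({x, y} : Finset (Fin m)) ∈ K ↔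
            ({x, y} : Finset (Fin m)) = {a, b} ∨ ({x, y} : Finset (Fin m)) = {b, c} ∨
            ({x, y} : Finset (Fin m)) = {c, d})) ∨
    (∃ a b c d : Fin m, W = {a, b, c, d} ∧
        ∀ x ∈ W, ∀ y ∈ W, x ≠ y →
          (({x, y} : Finset (Fin m)) ∈ K ↔
            ({x, y} : Finset (Fin m)) = {a, b} ∨ ({x, y} : Finset (Fin m)) = {b, c} ∨
            ({x, y} : Finset (Fin m)) = {c, d} ∨ ({x, y} : Finset (Fin m)) = {d, a})) ∨
    (∃ a b c d : Fin m, W = {a, b, c, d} ∧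
        ∀ x ∈ W, ∀ y ∈ W, x ≠ y →
          (({x, y} : Finset (Fin m)) ∈ K ↔
            ({x, y} : Finset (Fin m)) = {a, b} ∨ ({x, y} : Finset (Fin m)) = {c, d})) := by
  obtain ⟨a, b, c, d, hab, hac, had, hbc, hbd, hcd, hWeq⟩ := card_eq_four' h4
  have hfW : ∀ i : Fin 4, (![a, b, c, d]) i ∈ W := by
    intro i
    rw [hWeq]
    fin_cases i <;> simp
  have finj : ∀ i j : Fin 4, (![a, b, c, d]) i = (![a, b, c, d]) j → i = j := by
    intro i j
    fin_cases i <;> fin_cases j <;> intro hij <;>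
      first
        | rfl
        | exact absurd hij hab | exact absurd hij hac | exact absurd hij had
        | exact absurd hij hbc | exact absurd hij hbd | exact absurd hij hcd
        | exact absurd hij (Ne.symm hab) | exact absurd hij (Ne.symm hac)
        | exact absurd hij (Ne.symm had) | exact absurd hij (Ne.symm hbc)
        | exact absurd hij (Ne.symm hbd) | exact absurd hij (Ne.symm hcd)
  have hsymmK : ∀ u v : Fin m, (({u, v} : Finset (Fin m)) ∈ K) ↔ ({v, u} : Finset (Fin m)) ∈ K :=
    fun u v => by rw [Finset.pair_comm]
  have bridge : ∀ i j : Fin 4, i ≠ j →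
      (EE K (![a, b, c, d]) (pidx i j) = true ↔
        ({(![a, b, c, d]) i, (![a, b, c, d]) j} : Finset (Fin m)) ∈ K) := by
    intro i j hij
    rw [EE_eq_true]
    fin_cases i <;> fin_cases j <;>
      first
        | exact absurd rfl hij
        | exact Iff.rfl
        | exact hsymmK _ _
  have h1' : ∀ i : Fin 4, ∃ j, j ≠ i ∧ EE K (![a, b, c, d]) (pidx i j) = false := by
    intro i
    obtain ⟨y, hyW, hyne, hyK⟩ := W_nonedge hK hghost hW hflag (hfW i)
    have hy4 : y = a ∨ y = b ∨ y = c ∨ y = d := by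
      rw [hWeq] at hyW; simpa using hyW
    have hyf : ∃ j : Fin 4, (![a, b, c, d]) j = y := by
      rcases hy4 with rfl | rfl | rfl | rfl
      exacts [⟨0, rfl⟩, ⟨1, rfl⟩, ⟨2, rfl⟩, ⟨3, rfl⟩]
    obtain ⟨j, rfl⟩ := hyf
    have hji : j ≠ i := fun h => hyne (by rw [h])
    refine ⟨j, hji, ?_⟩
    cases hee : EE K (![a, b, c, d]) (pidx i j) with
    | false => rfl
    | true =>
      exfalso
      exact hyK ((bridge i j (Ne.symm hji)).1 hee)
  have h2' : ∀ i : Fin 4, ∃ j, j ≠ i ∧ EE K (![a, b, c, d]) (pidx i j) = true := by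
    intro i
    by_contra hcon
    push_neg at hcon
    have hnon : ∀ j : Fin 4, j ≠ i →
        ({(![a, b, c, d]) i, (![a, b, c, d]) j} : Finset (Fin m)) ∉ K := by
      intro j hji hmem
      exact (hcon j hji) ((bridge i j (Ne.symm hji)).2 hmem)
    have hdom : ∀ j1 j2 j3 : Fin 4, j1 ≠ i → j2 ≠ i → j3 ≠ i →
        j1 ≠ j2 → j1 ≠ j3 → j2 ≠ j3 → False := by
      intro j1 j2 j3 h1 h2 h3 h12 h13 h23
      apply three_dom hK hfacet (hghost ((![a, b, c, d]) i))
        (fun h => h12 (finj _ _ h)) (fun h => h13 (finj _ _ h)) (fun h => h23 (finj _ _ h))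
      intro w hw
      simp only [Finset.mem_insert, Finset.mem_singleton] at hw
      refine ⟨(![a, b, c, d]) i, by simp, ?_⟩
      rcases hw with rfl | rfl | rfl
      · exact ⟨fun h => h1 (finj _ _ h).symm, hnon j1 h1⟩
      · exact ⟨fun h => h2 (finj _ _ h).symm, hnon j2 h2⟩
      · exact ⟨fun h => h3 (finj _ _ h).symm, hnon j3 h3⟩
    fin_cases i
    · exact hdom 1 2 3 (by decide) (by decide) (by decide) (by decide) (by decide) (by decide)
    · exact hdom 0 2 3 (by decide) (by decide) (by decide) (by decide) (by decide) (by decide)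
    · exact hdom 0 1 3 (by decide) (by decide) (by decide) (by decide) (by decide) (by decide)
    · exact hdom 0 1 2 (by decide) (by decide) (by decide) (by decide) (by decide) (by decide)
  obtain ⟨a', b', c', d', hab', hac', had', hbc', hbd', hcd', hpat⟩ :=
    fin4_classify (EE K (![a, b, c, d])) h1' h2'
  have huniv : ({a', b', c', d'} : Finset (Fin 4)) = Finset.univ := by
    apply Finset.eq_univ_of_card
    rw [Finset.card_insert_of_notMem (by simp [hab', hac', had']),
      Finset.card_insert_of_notMem (by simp [hbc', hbd']),
      Finset.card_insert_of_notMem (by simp [hcd']), Finset.card_singleton]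
    simp
  have hidx : ∀ i : Fin 4, i = a' ∨ i = b' ∨ i = c' ∨ i = d' := by
    intro i
    have : i ∈ ({a', b', c', d'} : Finset (Fin 4)) := by rw [huniv]; exact Finset.mem_univ i
    simpa using this
  have hWsub : W ⊆ {(![a, b, c, d]) a', (![a, b, c, d]) b',
      (![a, b, c, d]) c', (![a, b, c, d]) d'} := by
    intro x hx
    rw [hWeq] at hx
    simp only [Finset.mem_insert, Finset.mem_singleton] at hx
    have hx' : ∃ i : Fin 4, x = (![a, b, c, d]) i := by
      rcases hx with rfl | rfl | rfl | rfl
      exacts [⟨0, rfl⟩, ⟨1, rfl⟩, ⟨2, rfl⟩, ⟨3, rfl⟩]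
    obtain ⟨i, rfl⟩ := hx'
    rcases hidx i with rfl | rfl | rfl | rfl <;> simp
  have hWeq' : W = {(![a, b, c, d]) a', (![a, b, c, d]) b',
      (![a, b, c, d]) c', (![a, b, c, d]) d'} := by
    apply Finset.Subset.antisymm hWsub
    intro x hx
    simp only [Finset.mem_insert, Finset.mem_singleton] at hx
    rcases hx with rfl | rfl | rfl | rfl <;> exact hfW _
  have hxmem : ∀ x ∈ W, ∃ u : Fin 4, x = (![a, b, c, d]) u := by
    intro x hx
    rw [hWeq] at hx
    simp only [Finset.mem_insert, Finset.mem_singleton] at hx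
    rcases hx with rfl | rfl | rfl | rfl
    exacts [⟨0, rfl⟩, ⟨1, rfl⟩, ⟨2, rfl⟩, ⟨3, rfl⟩]
  have pairlem : ∀ u v s t : Fin 4,
      (({(![a, b, c, d]) u, (![a, b, c, d]) v} : Finset (Fin m)) =
          {(![a, b, c, d]) s, (![a, b, c, d]) t} ↔
        ((u = s ∧ v = t) ∨ (u = t ∧ v = s))) := by
    intro u v s t
    rw [pair_eq_pair_iff]
    constructor
    · rintro (⟨h1, h2⟩ | ⟨h1, h2⟩)
      · exact Or.inl ⟨finj _ _ h1, finj _ _ h2⟩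
      · exact Or.inr ⟨finj _ _ h1, finj _ _ h2⟩
    · rintro (⟨rfl, rfl⟩ | ⟨rfl, rfl⟩)
      · exact Or.inl ⟨rfl, rfl⟩
      · exact Or.inr ⟨rfl, rfl⟩
  rcases hpat with hpd | hpe | hpf
  · refine Or.inl ⟨_, _, _, _, hWeq', ?_⟩
    intro x hx y hy hxy
    obtain ⟨u, rfl⟩ := hxmem x hx
    obtain ⟨v, rfl⟩ := hxmem y hy
    have huv : u ≠ v := fun h => hxy (by rw [h])
    rw [← bridge u v huv, hpd u v huv, pairlem u v a' b', pairlem u v b' c',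
      pairlem u v c' d']
    unfold pd
    tauto
  · refine Or.inr (Or.inl ⟨_, _, _, _, hWeq', ?_⟩)
    intro x hx y hy hxy
    obtain ⟨u, rfl⟩ := hxmem x hx
    obtain ⟨v, rfl⟩ := hxmem y hy
    have huv : u ≠ v := fun h => hxy (by rw [h])
    rw [← bridge u v huv, hpe u v huv, pairlem u v a' b', pairlem u v b' c',
      pairlem u v c' d', pairlem u v d' a']
    unfold pe pd
    tauto
  · refine Or.inr (Or.inr ⟨_, _, _, _, hWeq', ?_⟩)
    intro x hx y hy hxy
    obtain ⟨u, rfl⟩ := hxmem x hx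
    obtain ⟨v, rfl⟩ := hxmem y hy
    have huv : u ≠ v := fun h => hxy (by rw [h])
    rw [← bridge u v huv, hpf u v huv, pairlem u v a' b', pairlem u v c' d']
    unfold pf
    tauto

end Classify3

section Final

variable {m : ℕ} {K : Set (Finset (Fin m))} {W : Finset (Fin m)}

lemma distinct_of_card4 {a b c d : Fin m} (h : ({a, b, c, d} : Finset (Fin m)).card = 4) :
    a ≠ b ∧ a ≠ c ∧ a ≠ d ∧ b ≠ c ∧ b ≠ d ∧ c ≠ d := by
  have hle : ∀ x y z : Fin m, ({x, y, z} : Finset (Fin m)).card ≤ 3 := by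
    intro x y z
    have h1 := Finset.card_insert_le x ({y, z} : Finset (Fin m))
    have h2 := Finset.card_insert_le y ({z} : Finset (Fin m))
    simp only [Finset.card_singleton] at h2
    omega
  refine ⟨?_, ?_, ?_, ?_, ?_, ?_⟩ <;> intro heq <;> subst heq
  · have hsub : ({a, a, c, d} : Finset (Fin m)) ⊆ {a, c, d} := by
      intro t ht; simp at ht ⊢; tauto
    have := (Finset.card_le_card hsub).trans (hle a c d); omega
  · have hsub : ({a, b, a, d} : Finset (Fin m)) ⊆ {a, b, d} := by
      intro t ht; simp at ht ⊢; tauto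
    have := (Finset.card_le_card hsub).trans (hle a b d); omega
  · have hsub : ({a, b, c, a} : Finset (Fin m)) ⊆ {a, b, c} := by
      intro t ht; simp at ht ⊢; tauto
    have := (Finset.card_le_card hsub).trans (hle a b c); omega
  · have hsub : ({a, b, b, d} : Finset (Fin m)) ⊆ {a, b, d} := by
      intro t ht; simp at ht ⊢; tauto
    have := (Finset.card_le_card hsub).trans (hle a b d); omega
  · have hsub : ({a, b, c, b} : Finset (Fin m)) ⊆ {a, b, c} := by
      intro t ht; simp at ht ⊢; tauto
    have := (Finset.card_le_card hsub).trans (hle a b c); omega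
  · have hsub : ({a, b, c, c} : Finset (Fin m)) ⊆ {a, b, c} := by
      intro t ht; simp at ht ⊢; tauto
    have := (Finset.card_le_card hsub).trans (hle a b c); omega

end Final


theorem bier_flag_classification {m : ℕ} (hm : 2 ≤ m)
    (K : Set (Finset (Fin m))) (hK : IsComplex K) (hKne : K ≠ Set.univ)
    (hghost : ∀ i : Fin m, ({i} : Finset (Fin m)) ∈ K)
    (W : Finset (Fin m))
    (hW : ∀ x : Fin m, x ∈ W ↔ ∃ σ : Finset (Fin m), IsMinNonFace K σ ∧ x ∈ σ) :
    IsFlag (bier K) ↔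
      -- (a)
      (W.card = 2) ∨
      -- (b)
      (W.card = 3 ∧ ∀ x ∈ W, ∀ y ∈ W, x ≠ y → ({x, y} : Finset (Fin m)) ∉ K) ∨
      -- (c)
      (W.card = 3 ∧ ∃ x ∈ W, ∃ y ∈ W, x ≠ y ∧ ({x, y} : Finset (Fin m)) ∈ K ∧
        ∀ p ∈ W, ∀ q ∈ W, p ≠ q → ({p, q} : Finset (Fin m)) ∈ K →
          ({p, q} : Finset (Fin m)) = {x, y}) ∨
      -- (d)
      (W.card = 4 ∧ ∃ a b c d : Fin m, W = {a, b, c, d} ∧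
        ∀ x ∈ W, ∀ y ∈ W, x ≠ y →
          (({x, y} : Finset (Fin m)) ∈ K ↔
            ({x, y} : Finset (Fin m)) = {a, b} ∨ ({x, y} : Finset (Fin m)) = {b, c} ∨
            ({x, y} : Finset (Fin m)) = {c, d})) ∨
      -- (e)
      (W.card = 4 ∧ ∃ a b c d : Fin m, W = {a, b, c, d} ∧
        ∀ x ∈ W, ∀ y ∈ W, x ≠ y →
          (({x, y} : Finset (Fin m)) ∈ K ↔
            ({x, y} : Finset (Fin m)) = {a, b} ∨ ({x, y} : Finset (Fin m)) = {b, c} ∨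
            ({x, y} : Finset (Fin m)) = {c, d} ∨ ({x, y} : Finset (Fin m)) = {d, a})) ∨
      -- (f)
      (W.card = 4 ∧ ∃ a b c d : Fin m, W = {a, b, c, d} ∧
        ∀ x ∈ W, ∀ y ∈ W, x ≠ y →
          (({x, y} : Finset (Fin m)) ∈ K ↔
            ({x, y} : Finset (Fin m)) = {a, b} ∨ ({x, y} : Finset (Fin m)) = {c, d})) := by
  rw [bierFlag_iff hK hKne]
  constructor
  · rintro ⟨hflag, hfacet⟩
    have h2le := two_le_W_card hK hKne hghost hW
    have h4le := W_card_le_four hK hKne hghost hW hflag hfacet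
    have hcases : W.card = 2 ∨ W.card = 3 ∨ W.card = 4 := by omega
    rcases hcases with h | h | h
    · exact Or.inl h
    · rcases forward_n3 hK hghost hW hflag h with hb | hc
      · exact Or.inr (Or.inl ⟨h, hb⟩)
      · exact Or.inr (Or.inr (Or.inl ⟨h, hc⟩))
    · rcases forward_n4 hK hghost hW hflag hfacet h with hd | he | hf
      · exact Or.inr (Or.inr (Or.inr (Or.inl ⟨h, hd⟩)))
      · exact Or.inr (Or.inr (Or.inr (Or.inr (Or.inl ⟨h, he⟩))))
      · exact Or.inr (Or.inr (Or.inr (Or.inr (Or.inr ⟨h, hf⟩))))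
  · intro hcase
    rcases hcase with h2 | ⟨h3, hb⟩ | ⟨h3, x, hx, y, hy, hxy, hxyK, huniq⟩
      | ⟨h4, a, b, c, d, hWeq, hpat⟩ | ⟨h4, a, b, c, d, hWeq, hpat⟩
      | ⟨h4, a, b, c, d, hWeq, hpat⟩
    · -- case (a)
      have hflag : IsFlag K := back_flag hK hghost hW (by
        intro τ hsub hc3
        exfalso
        have := Finset.card_le_card hsub
        omega)
      exact ⟨hflag, back_facet hK hghost hW hflag (by omega)
        (fun h4' => absurd h4' (by omega))⟩
    · -- case (b)
      have hflag : IsFlag K := back_flag hK hghost hW (by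
        intro τ hsub hc3
        obtain ⟨p, q, r, hpq, hpr, hqr, rfl⟩ := Finset.card_eq_three.1 hc3
        exact ⟨p, by simp, q, by simp, hpq,
          hb p (hsub (by simp)) q (hsub (by simp)) hpq⟩)
      exact ⟨hflag, back_facet hK hghost hW hflag (by omega)
        (fun h4' => absurd h4' (by omega))⟩
    · -- case (c)
      have hflag : IsFlag K := back_flag hK hghost hW (by
        intro τ hsub hc3
        obtain ⟨p, q, r, hpq, hpr, hqr, rfl⟩ := Finset.card_eq_three.1 hc3
        by_cases h1 : ({p, q} : Finset (Fin m)) ∈ K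
        · by_cases h2 : ({p, r} : Finset (Fin m)) ∈ K
          · exfalso
            have e1 := huniq p (hsub (by simp)) q (hsub (by simp)) hpq h1
            have e2 := huniq p (hsub (by simp)) r (hsub (by simp)) hpr h2
            have := e1.trans e2.symm
            rcases pair_eq_pair_iff.1 this with ⟨-, hqr'⟩ | ⟨hpr', -⟩
            · exact hqr hqr'
            · exact hpr hpr'
          · exact ⟨p, by simp, r, by simp, hpr, h2⟩
        · exact ⟨p, by simp, q, by simp, hpq, h1⟩)
      exact ⟨hflag, back_facet hK hghost hW hflag (by omega)
        (fun h4' => absurd h4' (by omega))⟩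
    · -- case (d) : path a-b-c-d
      obtain ⟨hab, hac, had, hbc, hbd, hcd⟩ := distinct_of_card4 (hWeq ▸ h4)
      have haW : a ∈ W := by rw [hWeq]; simp
      have hbW : b ∈ W := by rw [hWeq]; simp
      have hcW : c ∈ W := by rw [hWeq]; simp
      have hdW : d ∈ W := by rw [hWeq]; simp
      have hKab : ({a, b} : Finset (Fin m)) ∈ K := (hpat a haW b hbW hab).2 (Or.inl rfl)
      have hKbc : ({b, c} : Finset (Fin m)) ∈ K := (hpat b hbW c hcW hbc).2 (Or.inr (Or.inl rfl))
      have hKcd : ({c, d} : Finset (Fin m)) ∈ K :=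
        (hpat c hcW d hdW hcd).2 (Or.inr (Or.inr rfl))
      have hNac : ({a, c} : Finset (Fin m)) ∉ K := fun h => by
        rcases (hpat a haW c hcW hac).1 h with h' | h' | h'
        · exact pair_ne_right (Ne.symm hac) (Ne.symm hbc) h'
        · exact pair_ne_left hab hac h'
        · exact pair_ne_left hac had h'
      have hNad : ({a, d} : Finset (Fin m)) ∉ K := fun h => by
        rcases (hpat a haW d hdW had).1 h with h' | h' | h'
        · exact pair_ne_right (Ne.symm had) (Ne.symm hbd) h'
        · exact pair_ne_left hab hac h'
        · exact pair_ne_left hac had h'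
      have hNbd : ({b, d} : Finset (Fin m)) ∉ K := fun h => by
        rcases (hpat b hbW d hdW hbd).1 h with h' | h' | h'
        · exact pair_ne_right (Ne.symm had) (Ne.symm hbd) h'
        · exact pair_ne_right (Ne.symm hbd) (Ne.symm hcd) h'
        · exact pair_ne_left hbc hbd h'
      have hflag : IsFlag K := back_flag hK hghost hW (by
        intro τ hsub hc3
        rcases triple_cases h4 hWeq hab hac had hbc hbd hcd hsub hc3 with hs | hs | hs | hs
        · exact ⟨b, hs (by simp), d, hs (by simp), hbd, hNbd⟩
        · exact ⟨a, hs (by simp), c, hs (by simp), hac, hNac⟩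
        · exact ⟨a, hs (by simp), d, hs (by simp), had, hNad⟩
        · exact ⟨a, hs (by simp), c, hs (by simp), hac, hNac⟩)
      refine ⟨hflag, back_facet hK hghost hW hflag (by omega) ?_⟩
      intro _ u hu
      rw [hWeq] at hu
      simp only [Finset.mem_insert, Finset.mem_singleton] at hu
      rcases hu with rfl | rfl | rfl | rfl
      · exact ⟨b, hbW, Ne.symm hab, hKab⟩
      · exact ⟨a, haW, hab, by rw [Finset.pair_comm]; exact hKab⟩
      · exact ⟨b, hbW, hbc, by rw [Finset.pair_comm]; exact hKbc⟩
      · exact ⟨c, hcW, hcd, by rw [Finset.pair_comm]; exact hKcd⟩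
    · -- case (e) : cycle a-b-c-d
      obtain ⟨hab, hac, had, hbc, hbd, hcd⟩ := distinct_of_card4 (hWeq ▸ h4)
      have haW : a ∈ W := by rw [hWeq]; simp
      have hbW : b ∈ W := by rw [hWeq]; simp
      have hcW : c ∈ W := by rw [hWeq]; simp
      have hdW : d ∈ W := by rw [hWeq]; simp
      have hKab : ({a, b} : Finset (Fin m)) ∈ K := (hpat a haW b hbW hab).2 (Or.inl rfl)
      have hKbc : ({b, c} : Finset (Fin m)) ∈ K :=
        (hpat b hbW c hcW hbc).2 (Or.inr (Or.inl rfl))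
      have hKcd : ({c, d} : Finset (Fin m)) ∈ K :=
        (hpat c hcW d hdW hcd).2 (Or.inr (Or.inr (Or.inl rfl)))
      have hKda : ({d, a} : Finset (Fin m)) ∈ K :=
        (hpat d hdW a haW (Ne.symm had)).2 (Or.inr (Or.inr (Or.inr rfl)))
      have hNac : ({a, c} : Finset (Fin m)) ∉ K := fun h => by
        rcases (hpat a haW c hcW hac).1 h with h' | h' | h' | h'
        · exact pair_ne_right (Ne.symm hac) (Ne.symm hbc) h'
        · exact pair_ne_left hab hac h'
        · exact pair_ne_left hac had h'
        · exact pair_ne_right hcd (Ne.symm hac) h'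
      have hNbd : ({b, d} : Finset (Fin m)) ∉ K := fun h => by
        rcases (hpat b hbW d hdW hbd).1 h with h' | h' | h' | h'
        · exact pair_ne_right (Ne.symm had) (Ne.symm hbd) h'
        · exact pair_ne_right (Ne.symm hbd) (Ne.symm hcd) h'
        · exact pair_ne_left hbc hbd h'
        · exact pair_ne_left hbd (Ne.symm hab) h'
      have hflag : IsFlag K := back_flag hK hghost hW (by
        intro τ hsub hc3
        rcases triple_cases h4 hWeq hab hac had hbc hbd hcd hsub hc3 with hs | hs | hs | hs
        · exact ⟨b, hs (by simp), d, hs (by simp), hbd, hNbd⟩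
        · exact ⟨a, hs (by simp), c, hs (by simp), hac, hNac⟩
        · exact ⟨b, hs (by simp), d, hs (by simp), hbd, hNbd⟩
        · exact ⟨a, hs (by simp), c, hs (by simp), hac, hNac⟩)
      refine ⟨hflag, back_facet hK hghost hW hflag (by omega) ?_⟩
      intro _ u hu
      rw [hWeq] at hu
      simp only [Finset.mem_insert, Finset.mem_singleton] at hu
      rcases hu with rfl | rfl | rfl | rfl
      · exact ⟨b, hbW, Ne.symm hab, hKab⟩
      · exact ⟨c, hcW, Ne.symm hbc, hKbc⟩
      · exact ⟨d, hdW, Ne.symm hcd, hKcd⟩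
      · exact ⟨a, haW, Ne.symm (Ne.symm had), hKda⟩
    · -- case (f) : matching ab / cd
      obtain ⟨hab, hac, had, hbc, hbd, hcd⟩ := distinct_of_card4 (hWeq ▸ h4)
      have haW : a ∈ W := by rw [hWeq]; simp
      have hbW : b ∈ W := by rw [hWeq]; simp
      have hcW : c ∈ W := by rw [hWeq]; simp
      have hdW : d ∈ W := by rw [hWeq]; simp
      have hKab : ({a, b} : Finset (Fin m)) ∈ K := (hpat a haW b hbW hab).2 (Or.inl rfl)
      have hKcd : ({c, d} : Finset (Fin m)) ∈ K := (hpat c hcW d hdW hcd).2 (Or.inr rfl)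
      have hNac : ({a, c} : Finset (Fin m)) ∉ K := fun h => by
        rcases (hpat a haW c hcW hac).1 h with h' | h'
        · exact pair_ne_right (Ne.symm hac) (Ne.symm hbc) h'
        · exact pair_ne_left hac had h'
      have hNad : ({a, d} : Finset (Fin m)) ∉ K := fun h => by
        rcases (hpat a haW d hdW had).1 h with h' | h'
        · exact pair_ne_right (Ne.symm had) (Ne.symm hbd) h'
        · exact pair_ne_left hac had h'
      have hNbc : ({b, c} : Finset (Fin m)) ∉ K := fun h => by
        rcases (hpat b hbW c hcW hbc).1 h with h' | h'
        · exact pair_ne_right (Ne.symm hac) (Ne.symm hbc) h'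
        · exact pair_ne_left hbc hbd h'
      have hflag : IsFlag K := back_flag hK hghost hW (by
        intro τ hsub hc3
        rcases triple_cases h4 hWeq hab hac had hbc hbd hcd hsub hc3 with hs | hs | hs | hs
        · exact ⟨b, hs (by simp), c, hs (by simp), hbc, hNbc⟩
        · exact ⟨a, hs (by simp), c, hs (by simp), hac, hNac⟩
        · exact ⟨a, hs (by simp), d, hs (by simp), had, hNad⟩
        · exact ⟨a, hs (by simp), c, hs (by simp), hac, hNac⟩)
      refine ⟨hflag, back_facet hK hghost hW hflag (by omega) ?_⟩
      intro _ u hu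
      rw [hWeq] at hu
      simp only [Finset.mem_insert, Finset.mem_singleton] at hu
      rcases hu with rfl | rfl | rfl | rfl
      · exact ⟨b, hbW, Ne.symm hab, hKab⟩
      · exact ⟨a, haW, hab, by rw [Finset.pair_comm]; exact hKab⟩
      · exact ⟨d, hdW, Ne.symm hcd, hKcd⟩
      · exact ⟨c, hcW, hcd, by rw [Finset.pair_comm]; exact hKcd⟩
end

section
/- Let m ≥ 1 and let K ≠ 2^[m] be a simplicial complex on [m]. Then the Bier sphere Bier(K) is pure of dimension m−2: every inclusion-maximal face of Bier(K) has exactly m−1 elements. In particular, no face of Bier(K) has m or more elements, and every face of Bier(K) is contained in a face with m−1 elements. -/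
open Classical

lemma disj_map {m : ℕ} (I J : Finset (Fin m)) :
    Disjoint (I.map (inlEmb m)) (J.map (inrEmb m)) := by
  simp only [Finset.disjoint_left, Finset.mem_map, inlEmb, inrEmb,
    Function.Embedding.inl_apply, Function.Embedding.inr_apply]
  rintro x ⟨a, _, rfl⟩ ⟨b, _, h⟩
  exact Sum.inl_ne_inr h.symm

lemma sum_le {m : ℕ} {K : Set (Finset (Fin m))} {I J : Finset (Fin m)}
    (hI : I ∈ K) (hJ : J ∈ dual K) (hd : Disjoint I J) :
    I.card + J.card + 1 ≤ m := by
  have hle : I.card + J.card ≤ m := by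
    have := Finset.card_le_card (Finset.subset_univ (I ∪ J))
    rwa [Finset.card_union_of_disjoint hd, Finset.card_univ, Fintype.card_fin] at this
  rcases lt_or_eq_of_le hle with h | h
  · omega
  · exfalso
    have hsub : I ⊆ Jᶜ := fun x hx =>
      Finset.mem_compl.mpr (Finset.disjoint_left.mp hd hx)
    have hcard : Jᶜ.card ≤ I.card := by
      rw [Finset.card_compl, Fintype.card_fin]
      omega
    have : I = Jᶜ := Finset.eq_of_subset_of_card_le hsub hcard
    exact hJ (this ▸ hI)

lemma step {m : ℕ} {K : Set (Finset (Fin m))} (hK : IsComplex K)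
    {I J : Finset (Fin m)} (hI : I ∈ K) (hJ : J ∈ dual K)
    (hd : Disjoint I J) (hcard : I.card + J.card + 2 ≤ m) :
    ∃ I' ∈ K, ∃ J' ∈ dual K, Disjoint I' J' ∧ I ⊆ I' ∧ J ⊆ J' ∧
      I'.card + J'.card = I.card + J.card + 1 := by
  -- there are at least two elements outside I ∪ J
  have hc : 2 ≤ (I ∪ J)ᶜ.card := by
    rw [Finset.card_compl, Finset.card_union_of_disjoint hd, Fintype.card_fin]
    omega
  obtain ⟨v, hv, w, hw, hvw⟩ := Finset.one_lt_card.mp hc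
  simp only [Finset.mem_compl, Finset.mem_union, not_or] at hv hw
  by_cases h1 : ∃ u, u ∉ I ∧ u ∉ J ∧ insert u I ∈ K
  · obtain ⟨u, huI, huJ, hu⟩ := h1
    refine ⟨insert u I, hu, J, hJ, ?_, Finset.subset_insert _ _, subset_rfl, ?_⟩
    · rw [Finset.disjoint_left]
      intro x hx
      rcases Finset.mem_insert.mp hx with rfl | hx
      · exact huJ
      · exact Finset.disjoint_left.mp hd hx
    · rw [Finset.card_insert_of_notMem huI]; omega
  by_cases h2 : ∃ u, u ∉ I ∧ u ∉ J ∧ insert u J ∈ dual K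
  · obtain ⟨u, huI, huJ, hu⟩ := h2
    refine ⟨I, hI, insert u J, hu, ?_, subset_rfl, Finset.subset_insert _ _, ?_⟩
    · rw [Finset.disjoint_right]
      intro x hx
      rcases Finset.mem_insert.mp hx with rfl | hx
      · exact huI
      · exact Finset.disjoint_right.mp hd hx
    · rw [Finset.card_insert_of_notMem huJ]; omega
  exfalso
  push_neg at h1 h2
  have hvd : (insert v J)ᶜ ∈ K := by
    by_contra h; exact h2 v hv.1 hv.2 h
  have hsub : insert w I ⊆ (insert v J)ᶜ := by
    intro x hx
    rw [Finset.mem_compl, Finset.mem_insert]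
    rcases Finset.mem_insert.mp hx with rfl | hx
    · push_neg; exact ⟨hvw.symm, hw.2⟩
    · push_neg
      exact ⟨fun h => hv.1 (h ▸ hx), Finset.disjoint_left.mp hd hx⟩
  exact h1 w hw.1 hw.2 (hK.2 _ hvd _ hsub)

lemma extend {m : ℕ} {K : Set (Finset (Fin m))} (hK : IsComplex K) :
    ∀ n : ℕ, ∀ I ∈ K, ∀ J ∈ dual K, Disjoint I J → I.card + J.card + n + 1 = m →
    ∃ I' ∈ K, ∃ J' ∈ dual K, Disjoint I' J' ∧ I ⊆ I' ∧ J ⊆ J' ∧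
      I'.card + J'.card + 1 = m := by
  intro n
  induction n with
  | zero => intro I hI J hJ hd h; exact ⟨I, hI, J, hJ, hd, subset_rfl, subset_rfl, by omega⟩
  | succ k ih =>
    intro I hI J hJ hd h
    obtain ⟨I', hI', J', hJ', hd', hII, hJJ, hc⟩ := step hK hI hJ hd (by omega)
    obtain ⟨I'', hI'', J'', hJ'', hd'', hII', hJJ', hc'⟩ :=
      ih I' hI' J' hJ' hd' (by omega)
    exact ⟨I'', hI'', J'', hJ'', hd'', hII.trans hII', hJJ.trans hJJ', hc'⟩

theorem bier_pure {m : ℕ} (hm : 1 ≤ m)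
    (K : Set (Finset (Fin m))) (hK : IsComplex K) (hKne : K ≠ Set.univ) :
    (∀ σ, IsFacet (bier K) σ → σ.card = m - 1) ∧
    (∀ σ ∈ bier K, σ.card ≤ m - 1) ∧
    (∀ σ ∈ bier K, ∃ τ ∈ bier K, σ ⊆ τ ∧ τ.card = m - 1) := by
  have hcard : ∀ (I J : Finset (Fin m)),
      (I.map (inlEmb m) ∪ J.map (inrEmb m)).card = I.card + J.card := by
    intro I J
    rw [Finset.card_union_of_disjoint (disj_map I J), Finset.card_map, Finset.card_map]
  have hext : ∀ σ ∈ bier K, ∃ τ ∈ bier K, σ ⊆ τ ∧ τ.card = m - 1 := by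
    rintro σ ⟨I, hI, J, hJ, hd, rfl⟩
    have hle := sum_le hI hJ hd
    obtain ⟨I', hI', J', hJ', hd', hII, hJJ, hc⟩ :=
      extend hK (m - 1 - (I.card + J.card)) I hI J hJ hd (by omega)
    refine ⟨I'.map (inlEmb m) ∪ J'.map (inrEmb m), ⟨I', hI', J', hJ', hd', rfl⟩, ?_, ?_⟩
    · exact Finset.union_subset_union (Finset.map_subset_map.mpr hII)
        (Finset.map_subset_map.mpr hJJ)
    · rw [hcard]; omega
  have hbd : ∀ σ ∈ bier K, σ.card ≤ m - 1 := by
    rintro σ ⟨I, hI, J, hJ, hd, rfl⟩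
    rw [hcard]
    have := sum_le hI hJ hd
    omega
  refine ⟨?_, hbd, hext⟩
  intro σ hσ
  obtain ⟨τ, hτ, hsub, hc⟩ := hext σ hσ.1
  rw [hσ.2 τ hτ hsub, hc]
end

section
/- Let X be a type, A ⊆ X a subset, and K ≠ 2^[m] a simplicial complex on [m], with Alexander dual K∨ = {σ ⊆ [m] : [m]∖σ ∉ K} regarded as a complex with the same ground set [m]. Then the polyhedral products Z_K(X,A) and Z_{K∨}(X, X∖A) are disjoint subsets of X^m, and their union is all of X^m. -/
open Classical

/-- The polyhedral product `Z_K(X, A) ⊆ X^m`. -/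
def polyProd {m : ℕ} (X : Type*) (A : Set X) (K : Set (Finset (Fin m))) :
    Set (Fin m → X) :=
  {x | ∃ σ ∈ K, ∀ i ∉ σ, x i ∈ A}

theorem polyProd_alexander_duality {m : ℕ} (X : Type*) (A : Set X)
    (K : Set (Finset (Fin m))) (hK : IsComplex K) (hKne : K ≠ Set.univ) :
    polyProd X A K ∩ polyProd X Aᶜ (dual K) = ∅ ∧
      polyProd X A K ∪ polyProd X Aᶜ (dual K) = Set.univ := by
  constructor
  · ext x
    simp only [Set.mem_inter_iff, Set.mem_empty_iff_false, iff_false]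
    rintro ⟨⟨σ, hσK, hσ⟩, ⟨τ, hτK, hτ⟩⟩
    apply hτK
    apply hK.2 σ hσK
    intro i hi
    rw [Finset.mem_compl] at hi
    by_contra hiσ
    exact (hτ i hi) (hσ i hiσ)
  · ext x
    simp only [Set.mem_union, Set.mem_univ, iff_true]
    by_cases h : (Finset.univ.filter (fun i => x i ∉ A)) ∈ K
    · left
      refine ⟨_, h, fun i hi => ?_⟩
      simp only [Finset.mem_filter, Finset.mem_univ, true_and] at hi
      tauto
    · right
      refine ⟨(Finset.univ.filter (fun i => x i ∉ A))ᶜ, ?_, fun i hi => ?_⟩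
      · simpa [dual] using h
      · simp only [Finset.mem_compl, Finset.mem_filter, Finset.mem_univ, true_and,
          not_not] at hi
        exact hi
end

section
/- Let K ≠ 2^[m] be a simplicial complex on [m] with Alexander dual K∨ = {σ ⊆ [m] : [m]∖σ ∉ K} regarded on the same ground set [m]. Let J = [−1,1] ⊆ ℝ, J≤0 = [−1,0], J≥0 = [0,1]. Then, as subsets of ℝ^m, Z_K(J, J≤0) ∩ Z_{K∨}(J, J≥0) equals the union, over all pairs (A,C) with A ∈ K, C ∈ K∨ and A ∩ C = ∅, of the boxes {x ∈ ℝ^m : x(i) ∈ [0,1] for i ∈ A, x(i) = 0 for i ∈ [m]∖(A∪C), and x(i) ∈ [−1,0] for i ∈ C}. -/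
open Classical

/-- The polyhedral product `Z_K(X, A) = ⋃_{σ ∈ K} (X, A)^σ` for subsets `A ⊆ X ⊆ ℝ`,
viewed as a subset of `ℝ^m`. -/
def polyProdSub {m : ℕ} (X A : Set ℝ) (K : Set (Finset (Fin m))) :
    Set (Fin m → ℝ) :=
  {x | ∃ σ ∈ K, (∀ i ∈ σ, x i ∈ X) ∧ ∀ i ∉ σ, x i ∈ A}

theorem bier_cubulation_decomposition {m : ℕ}
    (K : Set (Finset (Fin m))) (hK : IsComplex K) (hKne : K ≠ Set.univ) :
    polyProdSub (Set.Icc (-1 : ℝ) 1) (Set.Icc (-1 : ℝ) 0) K ∩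
      polyProdSub (Set.Icc (-1 : ℝ) 1) (Set.Icc (0 : ℝ) 1) (dual K) =
    {x : Fin m → ℝ | ∃ A ∈ K, ∃ C ∈ dual K, Disjoint A C ∧
      (∀ i ∈ A, x i ∈ Set.Icc (0 : ℝ) 1) ∧
      (∀ i, i ∉ A → i ∉ C → x i = 0) ∧
      (∀ i ∈ C, x i ∈ Set.Icc (-1 : ℝ) 0)} := by
  have hdual : ∀ σ ∈ dual K, ∀ τ ⊆ σ, τ ∈ dual K := by
    intro σ hσ τ hτ hmem
    exact hσ (hK.2 _ hmem _ (Finset.compl_subset_compl.2 hτ))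
  ext x
  constructor
  · rintro ⟨⟨σ, hσ, hσ1, hσ2⟩, ⟨τ, hτ, hτ1, hτ2⟩⟩
    refine ⟨σ.filter (fun i => 0 < x i), hK.2 _ hσ _ (Finset.filter_subset _ _),
      τ.filter (fun i => x i < 0), hdual _ hτ _ (Finset.filter_subset _ _), ?_, ?_, ?_, ?_⟩
    · rw [Finset.disjoint_left]
      intro i hi hi'
      simp only [Finset.mem_filter] at hi hi'
      exact absurd hi'.2 (not_lt.2 hi.2.le)
    · intro i hi
      simp only [Finset.mem_filter] at hi
      exact ⟨hi.2.le, (hσ1 i hi.1).2⟩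
    · intro i hi hi'
      simp only [Finset.mem_filter, not_and, not_lt] at hi hi'
      have h1 : x i ≤ 0 := by
        by_cases hiσ : i ∈ σ
        · exact hi hiσ
        · exact (hσ2 i hiσ).2
      have h2 : 0 ≤ x i := by
        by_cases hiτ : i ∈ τ
        · exact hi' hiτ
        · exact (hτ2 i hiτ).1
      exact le_antisymm h1 h2
    · intro i hi
      simp only [Finset.mem_filter] at hi
      exact ⟨(hτ1 i hi.1).1, hi.2.le⟩
  · rintro ⟨A, hA, C, hC, hdisj, h1, h2, h3⟩
    constructor
    · refine ⟨A, hA, fun i hi => ⟨le_trans (by norm_num) (h1 i hi).1, (h1 i hi).2⟩, ?_⟩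
      intro i hi
      by_cases hiC : i ∈ C
      · exact h3 i hiC
      · rw [h2 i hi hiC]; exact ⟨by norm_num, le_refl 0⟩
    · refine ⟨C, hC, fun i hi => ⟨(h3 i hi).1, le_trans (h3 i hi).2 (by norm_num)⟩, ?_⟩
      intro i hi
      by_cases hiA : i ∈ A
      · exact h1 i hiA
      · rw [h2 i hiA hi]; exact ⟨le_refl 0, by norm_num⟩
end

section
/- Let m ≥ 3, let K ≠ 2^[m] be a simplicial complex on [m], and let i, j, k be three distinct elements of [m] such that {i,j} ∈ K, {i,k} ∉ K, {j,k} ∉ K, {k} ∈ K, {i'} ∈ K∨, {j'} ∈ K∨, and {i',j'} ∉ K∨. Then the full subcomplex of Bier(K) on the 5-element set S = {i, j, i', k, j'} is the 5-cycle with edge set {{i,j}, {j,i'}, {i',k}, {k,j'}, {j',i}}: its faces are exactly ∅, the five singletons of S, and these five 2-element sets. -/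
open Classical

lemma pair_subsets {α : Type*} [DecidableEq α] {I : Finset α} {a b : α}
    (h : I ⊆ {a, b}) : I = ∅ ∨ I = {a} ∨ I = {b} ∨ I = {a, b} := by
  by_cases ha : a ∈ I <;> by_cases hb : b ∈ I
  · right; right; right
    apply subset_antisymm h
    intro x hx; simp at hx; rcases hx with rfl | rfl <;> assumption
  · right; left
    apply subset_antisymm
    · intro x hx; have := h hx; simp at this ⊢
      rcases this with rfl | rfl; · rfl
      · exact absurd hx hb
    · simp [ha]
  · right; right; left
    apply subset_antisymm
    · intro x hx; have := h hx; simp at this ⊢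
      rcases this with rfl | rfl; · exact absurd hx ha
      · rfl
    · simp [hb]
  · left
    apply Finset.eq_empty_of_forall_notMem
    intro x hx; have := h hx; simp at this
    rcases this with rfl | rfl <;> [exact ha hx; exact hb hx]

set_option maxHeartbeats 1000000 in
theorem bier_full_subcomplex_five_cycle {m : ℕ} (hm : 3 ≤ m)
    (K : Set (Finset (Fin m))) (hK : IsComplex K) (hKne : K ≠ Set.univ)
    (i j k : Fin m) (hij : i ≠ j) (hik : i ≠ k) (hjk : j ≠ k)
    (hedge : ({i, j} : Finset (Fin m)) ∈ K)
    (hik' : ({i, k} : Finset (Fin m)) ∉ K)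
    (hjk' : ({j, k} : Finset (Fin m)) ∉ K)
    (hk : ({k} : Finset (Fin m)) ∈ K)
    (hi' : ({i} : Finset (Fin m)) ∈ dual K)
    (hj' : ({j} : Finset (Fin m)) ∈ dual K)
    (hij' : ({i, j} : Finset (Fin m)) ∉ dual K) :
    ∀ τ : Finset (Fin m ⊕ Fin m),
      (τ ∈ bier K ∧ τ ⊆ {Sum.inl i, Sum.inl j, Sum.inr i, Sum.inl k, Sum.inr j}) ↔
      (τ = ∅ ∨
       τ = {Sum.inl i} ∨ τ = {Sum.inl j} ∨ τ = {Sum.inr i} ∨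
       τ = {Sum.inl k} ∨ τ = {Sum.inr j} ∨
       τ = {Sum.inl i, Sum.inl j} ∨ τ = {Sum.inl j, Sum.inr i} ∨
       τ = {Sum.inr i, Sum.inl k} ∨ τ = {Sum.inl k, Sum.inr j} ∨
       τ = {Sum.inr j, Sum.inl i}) := by
  -- basic faces
  have hiK : ({i} : Finset (Fin m)) ∈ K := hK.2 _ hedge _ (by simp)
  have hjK : ({j} : Finset (Fin m)) ∈ K := hK.2 _ hedge _ (by simp)
  have hemptyD : (∅ : Finset (Fin m)) ∈ dual K := by
    intro h
    apply hKne
    ext σ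
    simp only [Set.mem_univ, iff_true]
    exact hK.2 _ (by simpa using h) _ (Finset.subset_univ σ)
  intro τ
  constructor
  · rintro ⟨⟨I, hI, J, hJ, hdisj, rfl⟩, hsub⟩
    -- I ⊆ {i, j, k}
    have hIsub : I ⊆ {i, j, k} := by
      intro x hx
      have : Sum.inl x ∈ ({Sum.inl i, Sum.inl j, Sum.inr i, Sum.inl k, Sum.inr j} :
          Finset (Fin m ⊕ Fin m)) := hsub (by simp [inlEmb]; exact Or.inl hx)
      simp at this
      simp
      tauto
    have hJsub : J ⊆ {i, j} := by
      intro x hx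
      have : Sum.inr x ∈ ({Sum.inl i, Sum.inl j, Sum.inr i, Sum.inl k, Sum.inr j} :
          Finset (Fin m ⊕ Fin m)) := hsub (by simp [inrEmb]; exact Or.inr hx)
      simp at this
      simp
      tauto
    -- classify I
    have hIcases : I = ∅ ∨ I = {i} ∨ I = {j} ∨ I = {i, j} ∨ I = {k} := by
      by_cases hkI : k ∈ I
      · have hiI : i ∉ I := fun hiI => hik' (hK.2 _ hI _ (by
          intro x hx; simp at hx; rcases hx with rfl | rfl <;> assumption))
        have hjI : j ∉ I := fun hjI => hjk' (hK.2 _ hI _ (by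
          intro x hx; simp at hx; rcases hx with rfl | rfl <;> assumption))
        right; right; right; right
        apply subset_antisymm
        · intro x hx
          have := hIsub hx
          simp at this ⊢
          rcases this with rfl | rfl | rfl
          · exact absurd hx hiI
          · exact absurd hx hjI
          · rfl
        · simp [hkI]
      · have : I ⊆ {i, j} := by
          intro x hx
          have := hIsub hx
          simp at this ⊢
          rcases this with rfl | rfl | rfl
          · left; rfl
          · right; rfl
          · exact absurd hx hkI
        exact (pair_subsets this).imp id (Or.imp id (Or.imp id Or.inl))
    have hJcases : J = ∅ ∨ J = {i} ∨ J = {j} := by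
      rcases pair_subsets hJsub with h | h | h | h
      · exact Or.inl h
      · exact Or.inr (Or.inl h)
      · exact Or.inr (Or.inr h)
      · exact absurd (h ▸ hJ) hij'
    have hdisj' : ∀ x, x ∈ I → x ∈ J → False := fun x h1 h2 =>
      Finset.disjoint_left.mp hdisj h1 h2
    rcases hIcases with rfl | rfl | rfl | rfl | rfl <;>
      rcases hJcases with rfl | rfl | rfl <;>
      simp_all [inlEmb, inrEmb, Finset.ext_iff] <;>
      first
        | tauto
        | (exfalso; exact hdisj' _ (by simp) (by simp))
  · have hdi : Disjoint ({i} : Finset (Fin m)) ({j} : Finset (Fin m)) :=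
      Finset.disjoint_singleton.mpr hij
    have hdj : Disjoint ({j} : Finset (Fin m)) ({i} : Finset (Fin m)) :=
      Finset.disjoint_singleton.mpr hij.symm
    have hdki : Disjoint ({k} : Finset (Fin m)) ({i} : Finset (Fin m)) :=
      Finset.disjoint_singleton.mpr (fun h => hik h.symm)
    have hdkj : Disjoint ({k} : Finset (Fin m)) ({j} : Finset (Fin m)) :=
      Finset.disjoint_singleton.mpr (fun h => hjk h.symm)
    rintro (rfl | rfl | rfl | rfl | rfl | rfl | rfl | rfl | rfl | rfl | rfl) <;>
      refine ⟨?_, by first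
        | exact Finset.empty_subset _
        | (intro x hx; simp at hx ⊢; tauto)⟩
    · exact ⟨∅, hK.1, ∅, hemptyD, by simp, by simp⟩
    · exact ⟨{i}, hiK, ∅, hemptyD, by simp, by simp [inlEmb]⟩
    · exact ⟨{j}, hjK, ∅, hemptyD, by simp, by simp [inlEmb]⟩
    · exact ⟨∅, hK.1, {i}, hi', by simp, by simp [inrEmb]⟩
    · exact ⟨{k}, hk, ∅, hemptyD, by simp, by simp [inlEmb]⟩
    · exact ⟨∅, hK.1, {j}, hj', by simp, by simp [inrEmb]⟩
    · exact ⟨{i, j}, hedge, ∅, hemptyD, by simp, by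
        simp [inlEmb, Finset.map_insert]⟩
    · exact ⟨{j}, hjK, {i}, hi', hdj, by
        ext x; simp [inlEmb, inrEmb]⟩
    · exact ⟨{k}, hk, {i}, hi', hdki, by
        ext x; simp [inlEmb, inrEmb]; tauto⟩
    · exact ⟨{k}, hk, {j}, hj', hdkj, by
        ext x; simp [inlEmb, inrEmb]⟩
    · exact ⟨{i}, hiK, {j}, hj', hdi, by
        ext x; simp [inlEmb, inrEmb]; tauto⟩
end
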